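/- arXiv:1707.07105 — 10 statements merged into one kernel-verified Lean document; each statement's English description precedes it below -/
import Mathlib

section
/- Let vmin, vmax be real numbers with 0 < vmin ≤ vmax, let v0 be a nonzero complex number with θ = arg(v0), and let φ = arccos(vmin/vmax). Then the convex voltage feasibility domain S_V = {v ∈ ℂ : |v| ≤ vmax and Re(v · conj(v0)) ≥ vmin · |v0|} equals the closed convex hull of the circular arc {vmax · exp(i·ψ) : ψ ∈ [θ − φ, θ + φ]}. -/
/-! The feasibility domain is the intersection of a closed disc with a half-plane, hence compact
and convex, so by Krein–Milman it is the closed convex hull of its extreme points. A point of the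
domain inside the open disc is the midpoint of two points of the domain obtained by moving
parallel to the boundary line of the half-plane, so every extreme point lies on the circle
`‖v‖ = vmax`; there the half-plane condition reads `cos (arg v - arg v0) ≥ vmin / vmax`, which
confines `v` to the arc. Conversely the arc lies in the closed convex domain. -/

open Complex Set ComplexConjugate

theorem notMem_extremePoints_of_add_mem_of_sub_mem {E : Type*} [AddCommGroup E]
    [Module ℝ E] {A : Set E} {x y : E} (hy : y ≠ 0) (hadd : x + y ∈ A) (hsub : x - y ∈ A) :
    x ∉ A.extremePoints ℝ := fun hx ↦
  hy <| by simpa using hx.2 hadd hsub (mem_openSegment_add_sub x y)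

theorem Real.le_cos_iff_abs_le_arccos {x a : ℝ} (hx : |x| ≤ Real.pi) (ha₁ : -1 ≤ a)
    (ha₂ : a ≤ 1) :
    a ≤ Real.cos x ↔ |x| ≤ Real.arccos a := by
  have hacos : Real.arccos (Real.cos x) = |x| := by
    rw [← Real.cos_abs]; exact Real.arccos_cos (abs_nonneg x) hx
  constructor
  · intro h; rw [← hacos]; exact Real.arccos_le_arccos h
  · intro h
    rw [← Real.cos_abs, ← Real.cos_arccos ha₁ ha₂]
    exact Real.cos_le_cos_of_nonneg_of_le_pi (abs_nonneg x) (Real.arccos_le_pi a) h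

theorem Complex.re_ofReal_mul_exp_mul_conj (r ψ : ℝ) (z : ℂ) :
    (r * exp (ψ * I) * conj z).re = r * ‖z‖ * Real.cos (ψ - arg z) := by
  have hpolar : (r : ℂ) * exp (ψ * I) * (‖z‖ * exp (arg z * -I))
      = (r * ‖z‖ : ℝ) * exp ((ψ - arg z : ℝ) * I) := by
    push_cast; rw [mul_mul_mul_comm, ← exp_add]; ring_nf
  conv_lhs => rw [← norm_mul_exp_arg_mul_I z]
  rw [map_mul, conj_ofReal, ← exp_conj, map_mul, conj_ofReal, conj_I, hpolar, re_ofReal_mul,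
    exp_ofReal_mul_I_re]

def voltageDomain (vmin vmax : ℝ) (v0 : ℂ) : Set ℂ :=
  {v | ‖v‖ ≤ vmax ∧ vmin * ‖v0‖ ≤ (v * conj v0).re}

def circleArc (r a b : ℝ) : Set ℂ :=
  {v | ∃ ψ ∈ Icc a b, v = r * exp (ψ * I)}

theorem voltageDomain_eq_inter (vmin vmax : ℝ) (v0 : ℂ) :
    voltageDomain vmin vmax v0 =
      Metric.closedBall 0 vmax ∩ {v | vmin * ‖v0‖ ≤ inner ℝ v0 v} := by
  ext v; simp [voltageDomain, Complex.inner]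

theorem isCompact_voltageDomain (vmin vmax : ℝ) (v0 : ℂ) :
    IsCompact (voltageDomain vmin vmax v0) := by
  rw [voltageDomain_eq_inter]
  exact (isCompact_closedBall 0 vmax).inter_right
    (isClosed_le continuous_const (continuous_const.inner continuous_id))

theorem convex_voltageDomain (vmin vmax : ℝ) (v0 : ℂ) :
    Convex ℝ (voltageDomain vmin vmax v0) := by
  rw [voltageDomain_eq_inter]
  exact (convex_closedBall 0 vmax).inter (convex_halfSpace_ge (innerₛₗ ℝ v0).isLinear _)

section VoltageDomain

variable {vmin vmax : ℝ} {v0 : ℂ}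

theorem norm_eq_of_mem_extremePoints_voltageDomain (hv0 : v0 ≠ 0) {v : ℂ}
    (hv : v ∈ (voltageDomain vmin vmax v0).extremePoints ℝ) : ‖v‖ = vmax := by
  obtain ⟨hvmax, hre⟩ := hv.1
  by_contra hne
  have hgap : 0 < vmax - ‖v‖ := sub_pos.2 (lt_of_le_of_ne hvmax hne)
  -- `I * v0` is parallel to the boundary line of the half-plane.
  set d : ℂ := ((vmax - ‖v‖) / ‖v0‖) • (I * v0)
  have hd : ‖d‖ = vmax - ‖v‖ := by
    rw [norm_smul, norm_mul, norm_I, one_mul, Real.norm_eq_abs, abs_of_pos (by positivity),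
      div_mul_cancel₀ _ (norm_ne_zero_iff.2 hv0)]
  have hd_re : (d * conj v0).re = 0 := by
    simp [d, mul_assoc, mul_conj', ← ofReal_pow]
  have hd0 : d ≠ 0 := norm_pos_iff.1 (hd ▸ hgap)
  have hadd : v + d ∈ voltageDomain vmin vmax v0 :=
    ⟨by linarith [norm_add_le v d], by simpa [add_mul, hd_re] using hre⟩
  have hsub : v - d ∈ voltageDomain vmin vmax v0 :=
    ⟨by linarith [norm_sub_le v d], by simpa [sub_mul, hd_re] using hre⟩
  exact notMem_extremePoints_of_add_mem_of_sub_mem hd0 hadd hsub hv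

theorem circleArc_subset_voltageDomain (hmin : 0 < vmin) (hle : vmin ≤ vmax) :
    circleArc vmax (arg v0 - Real.arccos (vmin / vmax)) (arg v0 + Real.arccos (vmin / vmax))
      ⊆ voltageDomain vmin vmax v0 := by
  rintro _ ⟨ψ, hψ, rfl⟩
  have hvmax : 0 < vmax := hmin.trans_le hle
  have hψθ : |ψ - arg v0| ≤ Real.arccos (vmin / vmax) :=
    abs_le.2 ⟨by linarith [hψ.1], by linarith [hψ.2]⟩
  have hcos : vmin / vmax ≤ Real.cos (ψ - arg v0) :=
    (Real.le_cos_iff_abs_le_arccos (hψθ.trans (Real.arccos_le_pi _))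
      (by linarith [div_pos hmin hvmax]) ((div_le_one hvmax).2 hle)).2 hψθ
  refine ⟨by simp [abs_of_pos hvmax], ?_⟩
  rw [re_ofReal_mul_exp_mul_conj, mul_right_comm]
  exact mul_le_mul_of_nonneg_right ((div_le_iff₀' hvmax).1 hcos) (norm_nonneg v0)

theorem mem_circleArc_of_norm_eq (hmin : 0 < vmin) (hle : vmin ≤ vmax) (hv0 : v0 ≠ 0)
    {v : ℂ} (hv : v ∈ voltageDomain vmin vmax v0) (hnorm : ‖v‖ = vmax) :
    v ∈ circleArc vmax (arg v0 - Real.arccos (vmin / vmax))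
      (arg v0 + Real.arccos (vmin / vmax)) := by
  have hvmax : 0 < vmax := hmin.trans_le hle
  have hv0_pos : 0 < ‖v0‖ := norm_pos_iff.2 hv0
  set w := v * conj v0
  have hw_re : 0 < w.re := (mul_pos hmin hv0_pos).trans_le hv.2
  have hw : w ≠ 0 := fun h ↦ by simp [h] at hw_re
  have hw_norm : ‖w‖ = vmax * ‖v0‖ := by simp [w, hnorm]
  have hcos : vmin / vmax ≤ Real.cos (arg w) := by
    rw [cos_arg hw, hw_norm, div_le_div_iff₀ hvmax (by positivity)]
    nlinarith [hv.2]
  have harg := (Real.le_cos_iff_abs_le_arccos (abs_arg_le_pi w)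
    (by linarith [div_pos hmin hvmax]) ((div_le_one hvmax).2 hle)).1 hcos
  obtain ⟨hlo, hhi⟩ := abs_le.1 harg
  refine ⟨arg v0 + arg w, ⟨by linarith, by linarith⟩, ?_⟩
  -- after multiplying by `‖v0‖ ^ 2`, both sides are `v0 * w` in polar form
  have h1 := norm_mul_exp_arg_mul_I v0
  have h2 := norm_mul_exp_arg_mul_I w
  have h3 := mul_conj' v0
  have h4 : (‖w‖ : ℂ) = vmax * ‖v0‖ := by exact_mod_cast hw_norm
  apply mul_left_cancel₀ (pow_ne_zero 2 (ofReal_ne_zero.2 hv0_pos.ne'))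
  push_cast
  rw [add_mul, exp_add]
  linear_combination (-v) * h3 - ‖w‖ * exp (arg w * I) * h1 - v0 * h2
    + ‖v0‖ * exp (arg v0 * I) * exp (arg w * I) * h4

end VoltageDomain

/-- The convex voltage feasibility domain equals the closed convex hull
of the circular arc of radius `vmax` with angles in `[θ - φ, θ + φ]`. -/
theorem voltage_domain_eq_closedConvexHull_arc
    (vmin vmax : ℝ) (hmin : 0 < vmin) (hle : vmin ≤ vmax)
    (v0 : ℂ) (hv0 : v0 ≠ 0)
    (θ φ : ℝ) (hθ : θ = Complex.arg v0) (hφ : φ = Real.arccos (vmin / vmax)) :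
    {v : ℂ | ‖v‖ ≤ vmax ∧ vmin * ‖v0‖ ≤ (v * (starRingEnd ℂ) v0).re}
      = closure (convexHull ℝ
          {v : ℂ | ∃ ψ ∈ Set.Icc (θ - φ) (θ + φ),
            v = (vmax : ℂ) * Complex.exp (ψ * Complex.I)}) := by
  subst hθ hφ
  change voltageDomain vmin vmax v0 = closure (convexHull ℝ (circleArc vmax _ _))
  have hconvex := convex_voltageDomain vmin vmax v0
  have hcompact := isCompact_voltageDomain vmin vmax v0
  refine Subset.antisymm ?_ ?_
  · conv_lhs => rw [← closure_convexHull_extremePoints hcompact hconvex]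
    refine closure_mono (convexHull_mono fun v hv ↦ ?_)
    exact mem_circleArc_of_norm_eq hmin hle hv0 (extremePoints_subset hv)
      (norm_eq_of_mem_extremePoints_voltageDomain hv0 hv)
  · exact closure_minimal (convexHull_min (circleArc_subset_voltageDomain hmin hle) hconvex)
      hcompact.isClosed
end

section
/- Let vmin, vmax be real numbers with 0 < vmin ≤ vmax, let v0 be a nonzero complex number with θ = arg(v0), and let φ = arccos(vmin/vmax). Let i be a nonzero complex number whose angle relative to v0 satisfies |arg(i · conj(v0))| ≤ φ. Then the point v* = vmax · i/|i| belongs to S_V = {v ∈ ℂ : |v| ≤ vmax and Re(v · conj(v0)) ≥ vmin · |v0|}, and for every v ∈ S_V one has Re(v · conj(i)) ≤ vmax · |i| = Re(v* · conj(i)). (Worst-case voltage for the active-power upper bound when the current is angularly aligned with the feasible voltage cone.) -/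
/-! The angle condition says that `i · conj v0` lies in the cone `|arg z| ≤ arccos (vmin/vmax)`,
i.e. `Re z ≥ (vmin/vmax) |z|`, so scaling `i` to modulus `vmax` lands in `S_V`.
Optimality is Cauchy–Schwarz: `Re(v · conj i) ≤ |v| |i| ≤ vmax |i|`, with equality when `v`
points along `i` with modulus `vmax`. -/

open ComplexConjugate

namespace Complex

lemma mul_norm_le_re_of_abs_arg_le_arccos {c : ℝ} (hc₀ : -1 ≤ c) (hc₁ : c ≤ 1) {z : ℂ}
    (h : |arg z| ≤ Real.arccos c) : c * ‖z‖ ≤ z.re := by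
  have hcos : c ≤ Real.cos (arg z) := by
    rw [← Real.cos_abs, ← Real.cos_arccos hc₀ hc₁]
    exact Real.cos_le_cos_of_nonneg_of_le_pi (abs_nonneg _) (Real.arccos_le_pi c) h
  calc c * ‖z‖ ≤ Real.cos (arg z) * ‖z‖ := mul_le_mul_of_nonneg_right hcos (norm_nonneg z)
    _ = z.re := by rw [mul_comm, norm_mul_cos_arg]

lemma re_mul_conj_le_norm_mul_norm (v w : ℂ) : (v * conj w).re ≤ ‖v‖ * ‖w‖ := by
  simpa only [norm_mul, norm_conj] using re_le_norm (v * conj w)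

lemma norm_ofReal_mul_div_norm {r : ℝ} {i : ℂ} (hr : 0 ≤ r) (hi : i ≠ 0) :
    ‖(r : ℂ) * (i / ‖i‖)‖ = r := by
  rw [norm_mul, norm_div, norm_real, norm_real, norm_norm, Real.norm_of_nonneg hr,
    div_self (norm_ne_zero_iff.mpr hi), mul_one]

lemma re_ofReal_mul_div_norm_mul_conj (r : ℝ) (i w : ℂ) :
    ((r : ℂ) * (i / ‖i‖) * conj w).re = r / ‖i‖ * (i * conj w).re := by
  rw [← re_ofReal_mul]
  congr 1
  push_cast
  ring

lemma re_ofReal_mul_div_norm_mul_conj_self (r : ℝ) {i : ℂ} (hi : i ≠ 0) :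
    ((r : ℂ) * (i / ‖i‖) * conj i).re = r * ‖i‖ := by
  rw [re_ofReal_mul_div_norm_mul_conj, mul_conj, normSq_eq_norm_sq, ofReal_re]
  field_simp [norm_ne_zero_iff.mpr hi]

end Complex

theorem worst_case_voltage_aligned_current_general
    (vmin vmax : ℝ) (hmin : 0 < vmin) (hle : vmin ≤ vmax)
    (v0 : ℂ)
    (φ : ℝ) (hφ : φ = Real.arccos (vmin / vmax))
    (i : ℂ) (hi : i ≠ 0)
    (hangle : |Complex.arg (i * (starRingEnd ℂ) v0)| ≤ φ) :
    ((vmax : ℂ) * (i / (‖i‖ : ℂ)) ∈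
        {v : ℂ | ‖v‖ ≤ vmax ∧
          vmin * ‖v0‖ ≤ (v * (starRingEnd ℂ) v0).re})
    ∧ (∀ v ∈ {v : ℂ | ‖v‖ ≤ vmax ∧
          vmin * ‖v0‖ ≤ (v * (starRingEnd ℂ) v0).re},
        (v * (starRingEnd ℂ) i).re ≤ vmax * ‖i‖)
    ∧ vmax * ‖i‖
        = (((vmax : ℂ) * (i / (‖i‖ : ℂ))) * (starRingEnd ℂ) i).re := by
  have hvmax : 0 < vmax := hmin.trans_le hle
  have hnorm_i : 0 < ‖i‖ := norm_pos_iff.mpr hi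
  have hcone : vmin / vmax * ‖i * conj v0‖ ≤ (i * conj v0).re :=
    Complex.mul_norm_le_re_of_abs_arg_le_arccos (by linarith [div_pos hmin hvmax])
      ((div_le_one hvmax).mpr hle) (hφ ▸ hangle)
  refine ⟨⟨(Complex.norm_ofReal_mul_div_norm hvmax.le hi).le, ?_⟩, fun v hv => ?_,
    (Complex.re_ofReal_mul_div_norm_mul_conj_self vmax hi).symm⟩
  · rw [Complex.re_ofReal_mul_div_norm_mul_conj]
    calc vmin * ‖v0‖ = vmax / ‖i‖ * (vmin / vmax * ‖i * conj v0‖) := by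
          rw [norm_mul, Complex.norm_conj]; field_simp
      _ ≤ vmax / ‖i‖ * (i * conj v0).re := by gcongr
  · exact (Complex.re_mul_conj_le_norm_mul_norm v i).trans
      (mul_le_mul_of_nonneg_right hv.1 hnorm_i.le)

/-- Worst-case voltage for the active-power upper bound when the current
is angularly aligned with the feasible voltage cone: `v* = vmax · i / |i|` belongs to
`S_V` and maximizes the active power `Re(v · conj i)` over `S_V`, with value `vmax · |i|`. -/
theorem worst_case_voltage_aligned_current
    (vmin vmax : ℝ) (hmin : 0 < vmin) (hle : vmin ≤ vmax)
    (v0 : ℂ) (hv0 : v0 ≠ 0)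
    (θ φ : ℝ) (hθ : θ = Complex.arg v0) (hφ : φ = Real.arccos (vmin / vmax))
    (i : ℂ) (hi : i ≠ 0)
    (hangle : |Complex.arg (i * (starRingEnd ℂ) v0)| ≤ φ) :
    ((vmax : ℂ) * (i / (‖i‖ : ℂ)) ∈
        {v : ℂ | ‖v‖ ≤ vmax ∧
          vmin * ‖v0‖ ≤ (v * (starRingEnd ℂ) v0).re})
    ∧ (∀ v ∈ {v : ℂ | ‖v‖ ≤ vmax ∧
          vmin * ‖v0‖ ≤ (v * (starRingEnd ℂ) v0).re},
        (v * (starRingEnd ℂ) i).re ≤ vmax * ‖i‖)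
    ∧ vmax * ‖i‖
        = (((vmax : ℂ) * (i / (‖i‖ : ℂ))) * (starRingEnd ℂ) i).re :=
  worst_case_voltage_aligned_current_general vmin vmax hmin hle v0 φ hφ i hi hangle
end

section
/- Let vmin, vmax be real numbers with 0 < vmin ≤ vmax, let v0 be a nonzero complex number with θ = arg(v0), and let φ = arccos(vmin/vmax). Let i be a nonzero complex number with δ = arg(i · conj(v0)) ∈ [−π, −φ]. Then for every v in S_V = {v ∈ ℂ : |v| ≤ vmax and Re(v · conj(v0)) ≥ vmin · |v0|} one has Re(v · conj(i)) ≤ vmax · |i| · cos(δ + φ), and this bound is attained at the worst-case voltage v = vmax · exp(i·(θ − φ)), which belongs to S_V. -/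
/-!
In polar coordinates relative to `v0`, a voltage `v = r e^{i(θ + ψ)}` lies in `S_V` iff
`r ≤ vmax` and `r cos ψ ≥ vmax cos φ`, while `i = |i| e^{i(θ + δ)}` turns the active power into
`|i| r cos (ψ - δ)`. The worst case is the corner `ψ = -φ` of this circular segment: the identity
`sin φ (vmax cos (δ + φ) - r cos (ψ - δ))
   = -sin (δ + φ) (r cos ψ - vmax cos φ) - sin δ (vmax - r cos (ψ + φ))`
exhibits the gap as a combination of the two constraints with multipliers that are nonnegative
exactly when `δ ∈ [-π, -φ]`.
-/

open Complex ComplexConjugate Real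

lemma conj_eq_norm_mul_exp_neg_arg_mul_I (z : ℂ) : conj z = ‖z‖ * exp (-(arg z * I)) := by
  conv_lhs => rw [← norm_mul_exp_arg_mul_I z]
  rw [map_mul, conj_ofReal, ← exp_conj, map_mul, conj_ofReal, conj_I, mul_neg]

lemma eq_norm_mul_exp_arg_add_arg_mul_conj {z : ℂ} (hz : z ≠ 0) (w : ℂ) :
    w = ‖w‖ * exp ((arg z + arg (w * conj z) : ℝ) * I) := by
  have hpolar := norm_mul_exp_arg_mul_I (w * conj z)
  rw [norm_mul, norm_conj] at hpolar
  apply mul_left_cancel₀ (ofReal_ne_zero.mpr (norm_ne_zero_iff.mpr hz))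
  calc (‖z‖ : ℂ) * w = w * conj z * exp (arg z * I) := by
        rw [conj_eq_norm_mul_exp_neg_arg_mul_I, mul_assoc, mul_assoc, ← Complex.exp_add,
          neg_add_cancel, Complex.exp_zero]
        ring
    _ = _ := by
        conv_lhs => rw [← hpolar]
        rw [ofReal_add, add_mul, Complex.exp_add]
        push_cast
        ring

lemma re_mul_conj_eq_mul_cos_sub {v w : ℂ} {a b α β : ℝ} (hv : v = a * exp (α * I))
    (hw : w = b * exp (β * I)) : (v * conj w).re = a * b * Real.cos (α - β) := by
  simp only [hv, hw, mul_re, mul_im, conj_re, conj_im, ofReal_re, ofReal_im,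
    exp_ofReal_mul_I_re, exp_ofReal_mul_I_im, Real.cos_sub, map_mul, conj_ofReal]
  ring

lemma mul_cos_sub_le_of_le_mul_cos {r R ψ φ δ : ℝ} (hr0 : 0 ≤ r) (hr : r ≤ R)
    (hψ : R * Real.cos φ ≤ r * Real.cos ψ) (hφ0 : 0 ≤ φ) (hφ : φ ≤ π / 2)
    (hδ : -π ≤ δ) (hδφ : δ + φ ≤ 0) :
    r * Real.cos (ψ - δ) ≤ R * Real.cos (δ + φ) := by
  have hsinφ : 0 ≤ Real.sin φ := sin_nonneg_of_nonneg_of_le_pi hφ0 (by linarith [pi_pos])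
  have hcosφ : 0 ≤ Real.cos φ := cos_nonneg_of_mem_Icc ⟨by linarith [pi_pos], hφ⟩
  have hφ2 := Real.cos_sq_add_sin_sq φ
  rcases hsinφ.eq_or_lt with hsin0 | hsinpos
  · have hcos1 : Real.cos φ = 1 := by nlinarith
    have hrR : r = R := by nlinarith [Real.cos_le_one ψ]
    have hrcos : r * Real.cos ψ = r := by nlinarith [Real.cos_le_one ψ]
    have hrsin : r * Real.sin ψ = 0 := by
      apply pow_eq_zero_iff two_ne_zero |>.mp
      linear_combination r ^ 2 * Real.sin_sq_add_cos_sq ψ - (r * Real.cos ψ + r) * hrcos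
    rw [Real.cos_add, Real.cos_sub, ← hsin0, hcos1, ← hrR]
    linear_combination Real.cos δ * hrcos + Real.sin δ * hrsin
  · have hsinδ : Real.sin δ ≤ 0 := sin_nonpos_of_nonpos_of_neg_pi_le (by linarith) hδ
    have hsinδφ : Real.sin (δ + φ) ≤ 0 := sin_nonpos_of_nonpos_of_neg_pi_le hδφ (by linarith)
    have hψφ : r * Real.cos (ψ + φ) ≤ R := by nlinarith [Real.cos_le_one (ψ + φ)]
    have hcert : Real.sin φ * (R * Real.cos (δ + φ) - r * Real.cos (ψ - δ))
        = -Real.sin (δ + φ) * (r * Real.cos ψ - R * Real.cos φ)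
          + -Real.sin δ * (R - r * Real.cos (ψ + φ)) := by
      simp only [Real.cos_add, Real.cos_sub, Real.sin_add]
      linear_combination (-(R * Real.sin δ)) * hφ2
    have : 0 ≤ Real.sin φ * (R * Real.cos (δ + φ) - r * Real.cos (ψ - δ)) := by
      rw [hcert]
      exact add_nonneg (mul_nonneg (by linarith) (by linarith))
        (mul_nonneg (by linarith) (by linarith))
    linarith [(mul_nonneg_iff_of_pos_left hsinpos).mp this]

theorem worst_case_voltage_lower_sector_general
    (vmin vmax : ℝ) (hmin : 0 < vmin) (hle : vmin ≤ vmax)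
    (v0 : ℂ) (hv0 : v0 ≠ 0)
    (θ φ : ℝ) (hθ : θ = Complex.arg v0) (hφ : φ = Real.arccos (vmin / vmax))
    (i : ℂ)
    (δ : ℝ) (hδ : δ = Complex.arg (i * (starRingEnd ℂ) v0))
    (hδmem : δ ∈ Set.Icc (-Real.pi) (-φ)) :
    (∀ v ∈ {v : ℂ | ‖v‖ ≤ vmax ∧
          vmin * ‖v0‖ ≤ (v * (starRingEnd ℂ) v0).re},
        (v * (starRingEnd ℂ) i).re ≤ vmax * ‖i‖ * Real.cos (δ + φ))
    ∧ ((vmax : ℂ) * Complex.exp ((θ - φ : ℝ) * Complex.I) ∈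
        {v : ℂ | ‖v‖ ≤ vmax ∧
          vmin * ‖v0‖ ≤ (v * (starRingEnd ℂ) v0).re})
    ∧ (((vmax : ℂ) * Complex.exp ((θ - φ : ℝ) * Complex.I)) * (starRingEnd ℂ) i).re
        = vmax * ‖i‖ * Real.cos (δ + φ) := by
  obtain ⟨hδπ, hδφ⟩ := hδmem
  have hvmax : 0 < vmax := hmin.trans_le hle
  have hcosφ : vmax * Real.cos φ = vmin := by
    rw [hφ, Real.cos_arccos (by linarith [div_pos hmin hvmax]) ((div_le_one hvmax).mpr hle)]
    field_simp
  have hφ0 : 0 ≤ φ := hφ ▸ arccos_nonneg _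
  have hφπ : φ ≤ π / 2 := hφ ▸ arccos_le_pi_div_two.mpr (div_pos hmin hvmax).le
  have hv0polar : v0 = ‖v0‖ * exp (θ * I) := hθ ▸ (norm_mul_exp_arg_mul_I v0).symm
  have hipolar : i = ‖i‖ * exp ((θ + δ : ℝ) * I) :=
    hθ ▸ hδ ▸ eq_norm_mul_exp_arg_add_arg_mul_conj hv0 i
  refine ⟨fun v ⟨hvle, hvre⟩ => ?_, ⟨?_, ?_⟩, ?_⟩
  · have hvpolar := (norm_mul_exp_arg_mul_I v).symm
    rw [re_mul_conj_eq_mul_cos_sub hvpolar hv0polar, mul_right_comm, ← hcosφ] at hvre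
    have hsector := mul_cos_sub_le_of_le_mul_cos (norm_nonneg v) hvle
      (le_of_mul_le_mul_right hvre (norm_pos_iff.mpr hv0)) hφ0 hφπ hδπ (by linarith)
    rw [re_mul_conj_eq_mul_cos_sub hvpolar hipolar, sub_add_eq_sub_sub, mul_right_comm,
      mul_right_comm vmax]
    exact mul_le_mul_of_nonneg_right hsector (norm_nonneg i)
  · rw [norm_mul, norm_exp_ofReal_mul_I, mul_one, norm_real, Real.norm_of_nonneg hvmax.le]
  · rw [re_mul_conj_eq_mul_cos_sub rfl hv0polar, sub_sub_cancel_left, Real.cos_neg,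
      mul_right_comm, hcosφ]
  · rw [re_mul_conj_eq_mul_cos_sub rfl hipolar, ← Real.cos_neg]
    congr 2
    ring

/-- If the current's angle relative to `v0` satisfies
`δ = arg(i · conj v0) ∈ [-π, -φ]`, then the active power over the voltage feasibility
domain is bounded by `vmax · |i| · cos(δ + φ)`, attained at `v = vmax · exp(i(θ - φ))`. -/
theorem worst_case_voltage_lower_sector
    (vmin vmax : ℝ) (hmin : 0 < vmin) (hle : vmin ≤ vmax)
    (v0 : ℂ) (hv0 : v0 ≠ 0)
    (θ φ : ℝ) (hθ : θ = Complex.arg v0) (hφ : φ = Real.arccos (vmin / vmax))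
    (i : ℂ) (hi : i ≠ 0)
    (δ : ℝ) (hδ : δ = Complex.arg (i * (starRingEnd ℂ) v0))
    (hδmem : δ ∈ Set.Icc (-Real.pi) (-φ)) :
    (∀ v ∈ {v : ℂ | ‖v‖ ≤ vmax ∧
          vmin * ‖v0‖ ≤ (v * (starRingEnd ℂ) v0).re},
        (v * (starRingEnd ℂ) i).re ≤ vmax * ‖i‖ * Real.cos (δ + φ))
    ∧ ((vmax : ℂ) * Complex.exp ((θ - φ : ℝ) * Complex.I) ∈
        {v : ℂ | ‖v‖ ≤ vmax ∧
          vmin * ‖v0‖ ≤ (v * (starRingEnd ℂ) v0).re})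
    ∧ (((vmax : ℂ) * Complex.exp ((θ - φ : ℝ) * Complex.I)) * (starRingEnd ℂ) i).re
        = vmax * ‖i‖ * Real.cos (δ + φ) :=
  worst_case_voltage_lower_sector_general vmin vmax hmin hle v0 hv0 θ φ hθ hφ i δ hδ hδmem
end

section
/- Let vmin, vmax be real numbers with 0 < vmin ≤ vmax, let v0 be a nonzero complex number with θ = arg(v0), and let φ = arccos(vmin/vmax). Let i be a nonzero complex number with δ = arg(i · conj(v0)) ∈ [φ, π]. Then for every v in S_V = {v ∈ ℂ : |v| ≤ vmax and Re(v · conj(v0)) ≥ vmin · |v0|} one has Re(v · conj(i)) ≤ vmax · |i| · cos(δ − φ), and this bound is attained at the worst-case voltage v = vmax · exp(i·(θ + φ)), which belongs to S_V. -/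
/-!
Multiplying by `conj v0` rotates the reference voltage onto the positive real axis:
`‖v0‖² Re (v conj i) = Re (u conj w)` with `u = v conj v0` and `w = i conj v0`, where `arg w = δ`.
In this frame `S_V` is the disk of radius `R = vmax ‖v0‖` cut by the half-plane
`Re u ≥ R cos φ`, and the direction of angle `δ ∈ [φ, π]` lies in the normal cone of this set
at its upper corner `R e^{iφ}`, which is the image of the worst-case voltage.
-/

open ComplexConjugate

/-- With `β = arccos (x / R) ≤ φ` we have `y ≤ R sin β`, so the left side is at most
`R cos (δ - β)`, and `cos` decreases on `[0, π]`. -/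
theorem mul_cos_add_mul_sin_le {R φ δ x y : ℝ} (hR : 0 < R) (hφ : 0 ≤ φ)
    (hδ : δ ∈ Set.Icc φ Real.pi) (hx : R * Real.cos φ ≤ x) (hxy : x ^ 2 + y ^ 2 ≤ R ^ 2) :
    x * Real.cos δ + y * Real.sin δ ≤ R * Real.cos (δ - φ) := by
  obtain ⟨hφδ, hδπ⟩ := hδ
  obtain ⟨hRx, hxR⟩ := abs_le_of_sq_le_sq' (by nlinarith : x ^ 2 ≤ R ^ 2) hR.le
  set β := Real.arccos (x / R)
  have hcosβ : R * Real.cos β = x := by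
    rw [Real.cos_arccos (by rw [le_div_iff₀ hR]; linarith)
      ((div_le_one hR).2 hxR)]
    field_simp
  have hβφ : β ≤ φ := by
    calc β ≤ Real.arccos (Real.cos φ) :=
          Real.arccos_le_arccos (by rw [le_div_iff₀ hR]; linarith)
      _ = φ := Real.arccos_cos hφ (hφδ.trans hδπ)
  have hsinβ : 0 ≤ R * Real.sin β :=
    mul_nonneg hR.le (Real.sin_nonneg_of_nonneg_of_le_pi (Real.arccos_nonneg _)
      (Real.arccos_le_pi _))
  have hy : y ≤ R * Real.sin β := by
    have : (R * Real.sin β) ^ 2 = R ^ 2 - x ^ 2 := by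
      rw [← hcosβ]; linear_combination R ^ 2 * Real.sin_sq_add_cos_sq β
    nlinarith
  calc x * Real.cos δ + y * Real.sin δ
      ≤ R * Real.cos β * Real.cos δ + R * Real.sin β * Real.sin δ := by
        rw [hcosβ]
        gcongr
        exact Real.sin_nonneg_of_nonneg_of_le_pi (hφ.trans hφδ) hδπ
    _ = R * Real.cos (δ - β) := by rw [Real.cos_sub]; ring
    _ ≤ R * Real.cos (δ - φ) := by
        gcongr
        have hβ : 0 ≤ β := Real.arccos_nonneg _
        exact Real.cos_le_cos_of_nonneg_of_le_pi (by linarith) (by linarith) (by linarith)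

namespace Complex

theorem re_mul_conj_eq_norm_mul (u w : ℂ) :
    (u * conj w).re = ‖w‖ * (u.re * Real.cos (arg w) + u.im * Real.sin (arg w)) := by
  rw [mul_re, conj_re, conj_im, ← norm_mul_cos_arg w, ← norm_mul_sin_arg w]
  ring

theorem re_mul_conj_le_of_arg_mem {u w : ℂ} {R φ : ℝ} (hR : 0 < R) (hφ : 0 ≤ φ)
    (hu : ‖u‖ ≤ R) (hre : R * Real.cos φ ≤ u.re) (hw : arg w ∈ Set.Icc φ Real.pi) :
    (u * conj w).re ≤ R * ‖w‖ * Real.cos (arg w - φ) := by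
  have hsq : u.re ^ 2 + u.im ^ 2 ≤ R ^ 2 := by
    have := pow_le_pow_left₀ (norm_nonneg u) hu 2
    rwa [Complex.sq_norm, normSq_apply, ← sq, ← sq] at this
  rw [re_mul_conj_eq_norm_mul, mul_comm R, mul_assoc]
  exact mul_le_mul_of_nonneg_left (mul_cos_add_mul_sin_le hR hφ hw hre hsq) (norm_nonneg w)

theorem re_ofReal_mul_exp_mul_conj_s5 (R φ : ℝ) (w : ℂ) :
    (R * exp (φ * I) * conj w).re = R * ‖w‖ * Real.cos (arg w - φ) := by
  rw [re_mul_conj_eq_norm_mul, re_ofReal_mul, im_ofReal_mul, exp_ofReal_mul_I_re,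
    exp_ofReal_mul_I_im, Real.cos_sub]
  ring

theorem exp_arg_add_mul_I_mul_conj (z : ℂ) (t : ℝ) :
    exp ((arg z + t : ℝ) * I) * conj z = ‖z‖ * exp (t * I) := by
  conv_lhs => arg 2; rw [← norm_mul_exp_arg_mul_I z]
  rw [map_mul, conj_ofReal, ← exp_conj, map_mul, conj_ofReal, conj_I, mul_left_comm,
    ← exp_add]
  congr 2
  push_cast
  ring

theorem re_mul_conj_mul_conj_mul_conj (v a i : ℂ) :
    (v * conj a * conj (i * conj a)).re = ‖a‖ ^ 2 * (v * conj i).re := by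
  rw [← re_ofReal_mul]
  congr 1
  rw [map_mul, conj_conj]
  push_cast
  linear_combination (v * conj i) * mul_conj' a

end Complex

theorem worst_case_voltage_upper_sector_general
    (vmin vmax : ℝ) (hmin : 0 < vmin) (hle : vmin ≤ vmax)
    (v0 : ℂ) (hv0 : v0 ≠ 0)
    (θ φ : ℝ) (hθ : θ = Complex.arg v0) (hφ : φ = Real.arccos (vmin / vmax))
    (i : ℂ)
    (δ : ℝ) (hδ : δ = Complex.arg (i * (starRingEnd ℂ) v0))
    (hδmem : δ ∈ Set.Icc φ Real.pi) :
    (∀ v ∈ {v : ℂ | ‖v‖ ≤ vmax ∧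
          vmin * ‖v0‖ ≤ (v * (starRingEnd ℂ) v0).re},
        (v * (starRingEnd ℂ) i).re ≤ vmax * ‖i‖ * Real.cos (δ - φ))
    ∧ ((vmax : ℂ) * Complex.exp ((θ + φ : ℝ) * Complex.I) ∈
        {v : ℂ | ‖v‖ ≤ vmax ∧
          vmin * ‖v0‖ ≤ (v * (starRingEnd ℂ) v0).re})
    ∧ (((vmax : ℂ) * Complex.exp ((θ + φ : ℝ) * Complex.I)) * (starRingEnd ℂ) i).re
        = vmax * ‖i‖ * Real.cos (δ - φ) := by
  subst hθ hδ
  have hvmax : 0 < vmax := hmin.trans_le hle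
  have hv0sq : 0 < ‖v0‖ ^ 2 := pow_pos (norm_pos_iff.2 hv0) 2
  have hφ0 : 0 ≤ φ := hφ ▸ Real.arccos_nonneg _
  have hcosφ : vmax * ‖v0‖ * Real.cos φ = vmin * ‖v0‖ := by
    rw [mul_right_comm, hφ, Real.cos_arccos (by linarith [div_pos hmin hvmax])
      ((div_le_one hvmax).2 hle)]
    field_simp
  have hframe : (vmax : ℂ) * Complex.exp ((Complex.arg v0 + φ : ℝ) * Complex.I) * conj v0
      = (vmax * ‖v0‖ : ℝ) * Complex.exp (φ * Complex.I) := by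
    rw [mul_assoc, Complex.exp_arg_add_mul_I_mul_conj]
    push_cast
    ring
  refine ⟨fun v ⟨hv, hvre⟩ => ?_, ⟨?_, ?_⟩, ?_⟩
  · have hbound := Complex.re_mul_conj_le_of_arg_mem (u := v * conj v0) (w := i * conj v0)
      (by positivity) hφ0 (by rw [norm_mul, Complex.norm_conj]; gcongr) (hcosφ.trans_le hvre)
      hδmem
    rw [Complex.re_mul_conj_mul_conj_mul_conj, norm_mul, Complex.norm_conj] at hbound
    refine le_of_mul_le_mul_left (hbound.trans_eq ?_) hv0sq
    ring
  · rw [norm_mul, Complex.norm_real, Complex.norm_exp_ofReal_mul_I, Real.norm_of_nonneg hvmax.le,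
      mul_one]
  · rw [hframe, Complex.re_ofReal_mul, Complex.exp_ofReal_mul_I_re, hcosφ]
  · have hvalue := Complex.re_ofReal_mul_exp_mul_conj_s5 (vmax * ‖v0‖) φ (i * conj v0)
    rw [← hframe, Complex.re_mul_conj_mul_conj_mul_conj, norm_mul, Complex.norm_conj] at hvalue
    refine mul_left_cancel₀ hv0sq.ne' (hvalue.trans ?_)
    ring

/-- If the current's angle relative to `v0` satisfies
`δ = arg(i · conj v0) ∈ [φ, π]`, then the active power over the voltage feasibility
domain is bounded by `vmax · |i| · cos(δ - φ)`, attained at `v = vmax · exp(i(θ + φ))`. -/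
theorem worst_case_voltage_upper_sector
    (vmin vmax : ℝ) (hmin : 0 < vmin) (hle : vmin ≤ vmax)
    (v0 : ℂ) (hv0 : v0 ≠ 0)
    (θ φ : ℝ) (hθ : θ = Complex.arg v0) (hφ : φ = Real.arccos (vmin / vmax))
    (i : ℂ) (hi : i ≠ 0)
    (δ : ℝ) (hδ : δ = Complex.arg (i * (starRingEnd ℂ) v0))
    (hδmem : δ ∈ Set.Icc φ Real.pi) :
    (∀ v ∈ {v : ℂ | ‖v‖ ≤ vmax ∧
          vmin * ‖v0‖ ≤ (v * (starRingEnd ℂ) v0).re},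
        (v * (starRingEnd ℂ) i).re ≤ vmax * ‖i‖ * Real.cos (δ - φ))
    ∧ ((vmax : ℂ) * Complex.exp ((θ + φ : ℝ) * Complex.I) ∈
        {v : ℂ | ‖v‖ ≤ vmax ∧
          vmin * ‖v0‖ ≤ (v * (starRingEnd ℂ) v0).re})
    ∧ (((vmax : ℂ) * Complex.exp ((θ + φ : ℝ) * Complex.I)) * (starRingEnd ℂ) i).re
        = vmax * ‖i‖ * Real.cos (δ - φ) :=
  worst_case_voltage_upper_sector_general vmin vmax hmin hle v0 hv0 θ φ hθ hφ i δ hδ hδmem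
end

section
/- Let vmin, vmax be real numbers with 0 < vmin ≤ vmax, let v0 be a nonzero complex number with θ = arg(v0), let φ = arccos(vmin/vmax), and let pmax be real. For a nonzero complex number i, the following are equivalent: (a) Re(v · conj(i)) ≤ pmax for every v in S_V = {v ∈ ℂ : |v| ≤ vmax and Re(v · conj(v0)) ≥ vmin · |v0|}; (b) the conjunction of: (i) if |arg(i · conj(v0))| ≤ φ then vmax · |i| ≤ pmax, (ii) vmax · (Re(i)·cos(θ − φ) + Im(i)·sin(θ − φ)) ≤ pmax, and (iii) vmax · (Re(i)·cos(θ + φ) + Im(i)·sin(θ + φ)) ≤ pmax. (The constraints (13) exactly describe the set of currents that are robustly feasible for the active-power upper bound over the voltage feasibility domain.) -/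
/-!
Rotating by `exp (-arg v0 * I)` turns `S_V` into the cap `‖w‖ ≤ vmax, vmin ≤ re w` and the
current `i` into `j`. The cap's two corners are `vmin ± s * I` with `s = vmax * sin φ`. The
linear functional `w ↦ re (w * conj j)` is maximised over this convex set at `vmax * j / ‖j‖`
when that point lies in the cap, which happens exactly when `|arg j| ≤ φ`; otherwise `j` lies
in the normal cone of one of the corners, so the maximum is attained there.
-/

open Complex ComplexConjugate

theorem Complex.abs_arg_le_arccos_iff {x : ℝ} (hx₁ : -1 ≤ x) (hx₂ : x ≤ 1) (z : ℂ) :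
    |arg z| ≤ Real.arccos x ↔ x * ‖z‖ ≤ z.re := by
  rcases eq_or_ne z 0 with rfl | hz
  · simp [Real.arccos_nonneg]
  rw [← Real.strictAntiOn_cos.le_iff_ge ⟨Real.arccos_nonneg x, Real.arccos_le_pi x⟩
      ⟨abs_nonneg _, abs_arg_le_pi z⟩, Real.cos_abs, cos_arg hz,
    Real.cos_arccos hx₁ hx₂, le_div_iff₀ (norm_pos_iff.2 hz)]

theorem Complex.re_mul_conj (w z : ℂ) : (w * conj z).re = w.re * z.re + w.im * z.im := by
  simp only [mul_re, conj_re, conj_im]; ring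

theorem Complex.re_mul_cos_sub_add_im_mul_sin_sub (z : ℂ) (θ φ : ℝ) :
    z.re * Real.cos (θ - φ) + z.im * Real.sin (θ - φ) =
      (z * conj (exp (θ * I))).re * Real.cos φ - (z * conj (exp (θ * I))).im * Real.sin φ := by
  simp only [mul_re, mul_im, conj_re, conj_im, exp_ofReal_mul_I_re, exp_ofReal_mul_I_im,
    Real.cos_sub, Real.sin_sub]
  ring

theorem mul_add_mul_le_of_mem_cap {vmin vmax s a b c d : ℝ} (hvmin : 0 ≤ vmin)
    (hs : 0 ≤ s) (hs2 : vmin ^ 2 + s ^ 2 = vmax ^ 2) (ha : vmin ≤ a)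
    (hab : a ^ 2 + b ^ 2 ≤ vmax ^ 2) (hd : 0 ≤ d) (hcd : s * c ≤ vmin * d) :
    a * c + b * d ≤ vmin * c + s * d := by
  rcases hs.eq_or_lt with rfl | hs
  · have ha' : a = vmin := by nlinarith
    have hb : b = 0 := by nlinarith
    simp [ha', hb]
  have hdot : a * vmin + b * s ≤ vmax ^ 2 := by
    nlinarith [sq_nonneg (a - vmin), sq_nonneg (b - s)]
  refine le_of_mul_le_mul_left ?_ hs
  -- `s • (c, d) = d • (vmin, s) + (vmin * d - s * c) • (-1, 0)` lies in the normal cone at the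
  -- corner `(vmin, s)`, spanned by the outer normals of the disc and of the half-plane there.
  nlinarith [mul_nonneg hd (sub_nonneg.2 hdot), mul_nonneg (sub_nonneg.2 hcd) (sub_nonneg.2 ha)]

theorem mul_re_le_mul_abs_im_of_lt {vmin vmax s : ℝ} (hvmin : 0 ≤ vmin) (hvmax : 0 ≤ vmax)
    (hs : 0 ≤ s) (hs2 : vmin ^ 2 + s ^ 2 = vmax ^ 2) {j : ℂ} (hj : vmax * j.re < vmin * ‖j‖) :
    s * j.re ≤ vmin * |j.im| := by
  rcases le_or_gt j.re 0 with hre | hre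
  · nlinarith [abs_nonneg j.im]
  have hnorm : ‖j‖ ^ 2 = j.re ^ 2 + j.im ^ 2 := by rw [Complex.sq_norm, normSq_apply]; ring
  have hsq : (vmax * j.re) ^ 2 ≤ (vmin * ‖j‖) ^ 2 :=
    pow_le_pow_left₀ (by positivity) hj.le 2
  rw [← pow_le_pow_iff_left₀ (by positivity) (by positivity) two_ne_zero]
  nlinarith [sq_abs j.im]

theorem forall_mem_cap_re_mul_conj_le_iff {vmin vmax s p : ℝ} (hvmin : 0 ≤ vmin)
    (hvmax : 0 ≤ vmax) (hs : 0 ≤ s) (hs2 : vmin ^ 2 + s ^ 2 = vmax ^ 2) (j : ℂ) :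
    (∀ w : ℂ, ‖w‖ ≤ vmax → vmin ≤ w.re → (w * conj j).re ≤ p) ↔
      ((vmin * ‖j‖ ≤ vmax * j.re → vmax * ‖j‖ ≤ p) ∧
        vmin * j.re - s * j.im ≤ p ∧ vmin * j.re + s * j.im ≤ p) := by
  have corner_norm (t : ℝ) (ht : t ^ 2 = s ^ 2) : ‖(⟨vmin, t⟩ : ℂ)‖ ≤ vmax := by
    rw [norm_eq_sqrt_sq_add_sq, ht, hs2, Real.sqrt_sq hvmax]
  constructor
  · intro h
    have hminus := h ⟨vmin, -s⟩ (corner_norm _ (neg_sq s)) le_rfl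
    have hplus := h ⟨vmin, s⟩ (corner_norm _ rfl) le_rfl
    rw [re_mul_conj] at hminus hplus
    refine ⟨fun hcone => ?_, by linarith, by linarith⟩
    rcases eq_or_ne j 0 with rfl | hj
    · simpa using hplus
    have hj' : 0 < ‖j‖ := norm_pos_iff.2 hj
    have hdir := h ((vmax / ‖j‖ : ℝ) * j) (by simp [abs_of_nonneg hvmax, hj'.ne'])
      (by rw [re_ofReal_mul, div_mul_eq_mul_div, le_div_iff₀ hj']; linarith)
    rwa [mul_assoc, mul_conj', re_ofReal_mul, ← ofReal_pow, ofReal_re, div_mul_eq_mul_div,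
      pow_two, ← mul_assoc, mul_div_cancel_right₀ _ hj'.ne'] at hdir
  · rintro ⟨hcone, hminus, hplus⟩ w hw hre
    by_cases hc : vmin * ‖j‖ ≤ vmax * j.re
    · calc (w * conj j).re ≤ ‖w * conj j‖ := re_le_norm _
        _ = ‖w‖ * ‖j‖ := by rw [norm_mul, norm_conj]
        _ ≤ vmax * ‖j‖ := by gcongr
        _ ≤ p := hcone hc
    have hcorner := mul_re_le_mul_abs_im_of_lt hvmin hvmax hs hs2 (not_le.1 hc)
    have hw2 : w.re ^ 2 + w.im ^ 2 ≤ vmax ^ 2 :=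
      (Real.sqrt_le_iff.1 (norm_eq_sqrt_sq_add_sq w ▸ hw)).2
    rw [re_mul_conj]
    rcases le_total 0 j.im with him | him
    · rw [abs_of_nonneg him] at hcorner
      linarith [mul_add_mul_le_of_mem_cap hvmin hs hs2 hre hw2 him hcorner]
    · rw [abs_of_nonpos him] at hcorner
      have := mul_add_mul_le_of_mem_cap (b := -w.im) hvmin hs hs2 hre
        (by linarith [neg_sq w.im]) (neg_nonneg.2 him) hcorner
      linarith

theorem forall_mem_voltage_domain_iff {vmin vmax p : ℝ} {v0 : ℂ} (hv0 : v0 ≠ 0) (i : ℂ) :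
    (∀ v ∈ {v : ℂ | ‖v‖ ≤ vmax ∧ vmin * ‖v0‖ ≤ (v * conj v0).re}, (v * conj i).re ≤ p) ↔
      ∀ w : ℂ, ‖w‖ ≤ vmax → vmin ≤ w.re → (w * conj (i * conj (exp (arg v0 * I)))).re ≤ p := by
  set e := exp (arg v0 * I)
  have he : e * conj e = 1 := by rw [mul_conj', norm_exp_ofReal_mul_I]; norm_num
  have hv0e : v0 = ‖v0‖ * e := (norm_mul_exp_arg_mul_I v0).symm
  rw [(mul_right_surjective₀ (left_ne_zero_of_mul_eq_one he)).forall]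
  refine forall_congr' fun w => ?_
  have hdomain : w * e * conj v0 = ‖v0‖ * w := by
    conv_lhs => rw [hv0e, map_mul, conj_ofReal]
    linear_combination (‖v0‖ * w : ℂ) * he
  have hvalue : w * e * conj i = w * conj (i * conj e) := by
    rw [map_mul, conj_conj]; ring
  rw [Set.mem_ofPred_eq, hdomain, hvalue, re_ofReal_mul, norm_mul, norm_exp_ofReal_mul_I, mul_one,
    mul_comm vmin, mul_le_mul_iff_right₀ (norm_pos_iff.2 hv0), and_imp]

theorem robust_active_power_constraints_characterization_general
    (vmin vmax : ℝ) (hmin : 0 < vmin) (hle : vmin ≤ vmax)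
    (v0 : ℂ) (hv0 : v0 ≠ 0)
    (θ φ : ℝ) (hθ : θ = Complex.arg v0) (hφ : φ = Real.arccos (vmin / vmax))
    (pmax : ℝ) (i : ℂ) :
    (∀ v ∈ {v : ℂ | ‖v‖ ≤ vmax ∧
        vmin * ‖v0‖ ≤ (v * (starRingEnd ℂ) v0).re},
      (v * (starRingEnd ℂ) i).re ≤ pmax)
    ↔ ((|Complex.arg (i * (starRingEnd ℂ) v0)| ≤ φ → vmax * ‖i‖ ≤ pmax)
        ∧ vmax * (i.re * Real.cos (θ - φ) + i.im * Real.sin (θ - φ)) ≤ pmax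
        ∧ vmax * (i.re * Real.cos (θ + φ) + i.im * Real.sin (θ + φ)) ≤ pmax) := by
  have hvmax : 0 < vmax := hmin.trans_le hle
  have hratio : vmin / vmax ≤ 1 := (div_le_one hvmax).2 hle
  have hratio' : -1 ≤ vmin / vmax := by linarith [div_nonneg hmin.le hvmax.le]
  have hcos : vmax * Real.cos φ = vmin := by
    rw [hφ, Real.cos_arccos hratio' hratio, mul_div_cancel₀ _ hvmax.ne']
  have hs : 0 ≤ vmax * Real.sin φ := mul_nonneg hvmax.le
    (Real.sin_nonneg_of_nonneg_of_le_pi (hφ ▸ Real.arccos_nonneg _) (hφ ▸ Real.arccos_le_pi _))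
  have hs2 : vmin ^ 2 + (vmax * Real.sin φ) ^ 2 = vmax ^ 2 := by
    rw [← hcos]; linear_combination vmax ^ 2 * Real.cos_sq_add_sin_sq φ
  set j := i * conj (exp (θ * I))
  have hj : ‖j‖ = ‖i‖ := by rw [norm_mul, norm_conj, norm_exp_ofReal_mul_I, mul_one]
  have hcone : |arg (i * conj v0)| ≤ φ ↔ vmin * ‖j‖ ≤ vmax * j.re := by
    rw [← norm_mul_exp_arg_mul_I v0, map_mul, conj_ofReal, mul_left_comm, arg_real_mul _
      (norm_pos_iff.2 hv0), ← hθ, hφ, abs_arg_le_arccos_iff hratio' hratio, div_mul_eq_mul_div,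
      div_le_iff₀ hvmax, mul_comm j.re]
  have hminus : vmax * (i.re * Real.cos (θ - φ) + i.im * Real.sin (θ - φ)) =
      vmin * j.re - vmax * Real.sin φ * j.im := by
    rw [re_mul_cos_sub_add_im_mul_sin_sub, ← hcos]; ring
  have hplus : vmax * (i.re * Real.cos (θ + φ) + i.im * Real.sin (θ + φ)) =
      vmin * j.re + vmax * Real.sin φ * j.im := by
    rw [← sub_neg_eq_add θ, re_mul_cos_sub_add_im_mul_sin_sub, Real.cos_neg, Real.sin_neg, ← hcos]
    ring
  rw [forall_mem_voltage_domain_iff hv0, ← hθ,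
    forall_mem_cap_re_mul_conj_le_iff hmin.le hvmax.le hs hs2, hcone, hj, hminus, hplus]

/-- The constraints (13) exactly describe the set of currents that are
robustly feasible for the active-power upper bound over the voltage feasibility domain. -/
theorem robust_active_power_constraints_characterization
    (vmin vmax : ℝ) (hmin : 0 < vmin) (hle : vmin ≤ vmax)
    (v0 : ℂ) (hv0 : v0 ≠ 0)
    (θ φ : ℝ) (hθ : θ = Complex.arg v0) (hφ : φ = Real.arccos (vmin / vmax))
    (pmax : ℝ) (i : ℂ) (hi : i ≠ 0) :
    (∀ v ∈ {v : ℂ | ‖v‖ ≤ vmax ∧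
        vmin * ‖v0‖ ≤ (v * (starRingEnd ℂ) v0).re},
      (v * (starRingEnd ℂ) i).re ≤ pmax)
    ↔ ((|Complex.arg (i * (starRingEnd ℂ) v0)| ≤ φ → vmax * ‖i‖ ≤ pmax)
        ∧ vmax * (i.re * Real.cos (θ - φ) + i.im * Real.sin (θ - φ)) ≤ pmax
        ∧ vmax * (i.re * Real.cos (θ + φ) + i.im * Real.sin (θ + φ)) ≤ pmax) :=
  robust_active_power_constraints_characterization_general vmin vmax hmin hle v0 hv0 θ φ hθ hφ pmax
    i
end

section
/- Let vmin, vmax be real numbers with 0 < vmin ≤ vmax, let v0 be a nonzero complex number with θ = arg(v0), let φ = arccos(vmin/vmax), and let pmax be real. The set of complex numbers i satisfying all of: (i) if |arg(i · conj(v0))| ≤ φ then vmax · |i| ≤ pmax, (ii) vmax · (Re(i)·cos(θ − φ) + Im(i)·sin(θ − φ)) ≤ pmax, and (iii) vmax · (Re(i)·cos(θ + φ) + Im(i)·sin(θ + φ)) ≤ pmax, is a convex subset of the plane. (The conditionally-described robust current feasible region of constraints (13) is convex.) -/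
/-!
Rotating by `exp (-θ * I)` moves `v0` to the positive real axis, turning the region into
`sectorCap φ vmax pmax`: the disc `vmax * ‖w‖ ≤ pmax` inside the sector `|arg w| ≤ φ`, together
with the half-planes tangent to that disc at the two edges of the sector. For `0 ≤ φ` this is the
intersection of the half-planes `vmax * (w * exp (ψ * I)).re ≤ pmax` over `ψ ∈ [-φ, φ]`: inside the
sector `ψ = -arg w` gives back the disc constraint, and outside it
`(w * exp (ψ * I)).re = ‖w‖ * cos (arg w + ψ)` is largest at an endpoint `ψ = ±φ`.
An intersection of half-planes is convex, and so is its preimage under a real-linear map.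
-/

open Complex ComplexConjugate

theorem Real.cos_sub_le_cos_sub_of_abs_le_of_lt {φ ψ β : ℝ} (hψ : |ψ| ≤ φ) (hφβ : φ < β)
    (hβ : β ≤ Real.pi) : Real.cos (β - ψ) ≤ Real.cos (β - φ) := by
  obtain ⟨hψl, hψr⟩ := abs_le.mp hψ
  have hmid : 0 ≤ Real.sin (β - (φ + ψ) / 2) :=
    Real.sin_nonneg_of_nonneg_of_le_pi (by linarith) (by linarith)
  have hhalf : 0 ≤ Real.sin ((φ - ψ) / 2) :=
    Real.sin_nonneg_of_nonneg_of_le_pi (by linarith) (by linarith)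
  have key := Real.cos_sub_cos (β - φ) (β - ψ)
  rw [show (β - φ + (β - ψ)) / 2 = β - (φ + ψ) / 2 by ring,
    show (β - φ - (β - ψ)) / 2 = -((φ - ψ) / 2) by ring, Real.sin_neg] at key
  nlinarith [mul_nonneg hmid hhalf]

namespace Complex

theorem re_mul_exp_ofReal_mul_I (w : ℂ) (t : ℝ) :
    (w * exp (t * I)).re = ‖w‖ * Real.cos (arg w + t) := by
  conv_lhs => rw [← norm_mul_exp_arg_mul_I w, mul_assoc, ← exp_add, ← add_mul, ← ofReal_add]
  rw [re_ofReal_mul, exp_ofReal_mul_I_re]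

theorem re_mul_exp_le_max_of_lt_abs_arg (w : ℂ) {φ ψ : ℝ} (hψ : |ψ| ≤ φ) (harg : φ < |arg w|) :
    (w * exp (ψ * I)).re ≤ max (w * exp (φ * I)).re (w * exp (-φ * I)).re := by
  simp only [re_mul_exp_ofReal_mul_I, ← ofReal_neg]
  rcases lt_abs.mp harg with hpos | hneg
  · refine le_max_of_le_right (mul_le_mul_of_nonneg_left ?_ (norm_nonneg w))
    have := Real.cos_sub_le_cos_sub_of_abs_le_of_lt ((abs_neg ψ).symm ▸ hψ) hpos (arg_le_pi w)
    rwa [sub_neg_eq_add, sub_eq_add_neg] at this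
  · refine le_max_of_le_left (mul_le_mul_of_nonneg_left ?_ (norm_nonneg w))
    have := Real.cos_sub_le_cos_sub_of_abs_le_of_lt hψ hneg (by linarith [neg_pi_lt_arg w])
    rwa [← Real.cos_neg, neg_sub', neg_neg, ← Real.cos_neg (-arg w - φ), neg_sub', neg_neg,
      sub_neg_eq_add, sub_neg_eq_add] at this

def sectorCap (φ c p : ℝ) : Set ℂ :=
  {w | (|arg w| ≤ φ → c * ‖w‖ ≤ p) ∧ c * (w * exp (φ * I)).re ≤ p ∧ c * (w * exp (-φ * I)).re ≤ p}

theorem sectorCap_eq_biInter {φ c p : ℝ} (hφ : 0 ≤ φ) (hc : 0 ≤ c) :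
    sectorCap φ c p = ⋂ ψ ∈ Set.Icc (-φ) φ, {w : ℂ | c * (w * exp (ψ * I)).re ≤ p} := by
  ext w
  simp only [sectorCap, Set.mem_ofPred_eq, Set.mem_iInter, Set.mem_Icc]
  constructor
  · rintro ⟨hdisc, hleft, hright⟩ ψ hψ
    by_cases harg : |arg w| ≤ φ
    · calc c * (w * exp (ψ * I)).re ≤ c * ‖w‖ := by
            gcongr
            simpa [norm_exp_ofReal_mul_I] using re_le_norm (w * exp (ψ * I))
        _ ≤ p := hdisc harg
    · calc c * (w * exp (ψ * I)).re
          ≤ c * max (w * exp (φ * I)).re (w * exp (-φ * I)).re := by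
            gcongr
            exact re_mul_exp_le_max_of_lt_abs_arg w (abs_le.mpr hψ) (not_le.mp harg)
        _ ≤ p := by rw [mul_max_of_nonneg _ _ hc]; exact max_le hleft hright
  · intro h
    refine ⟨fun harg => ?_, h φ ⟨by linarith, le_rfl⟩, by exact_mod_cast h (-φ) ⟨le_rfl, by linarith⟩⟩
    have := h (-arg w) (by simpa [and_comm, neg_le] using abs_le.mp harg)
    rwa [re_mul_exp_ofReal_mul_I, add_neg_cancel, Real.cos_zero, mul_one] at this

theorem convex_sectorCap {φ c p : ℝ} (hφ : 0 ≤ φ) (hc : 0 ≤ c) : Convex ℝ (sectorCap φ c p) := by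
  rw [sectorCap_eq_biInter hφ hc]
  exact convex_iInter₂ fun ψ _ =>
    convex_halfSpace_le (c • reLm ∘ₗ LinearMap.mulRight ℝ (exp (ψ * I))).isLinear p

theorem arg_mul_conj (z : ℂ) {v : ℂ} (hv : v ≠ 0) :
    arg (z * conj v) = arg (z * exp (-arg v * I)) := by
  conv_lhs => rw [← norm_mul_exp_arg_mul_I v]
  rw [map_mul, conj_ofReal, ← exp_conj, map_mul, conj_ofReal, conj_I, mul_neg, ← neg_mul,
    mul_left_comm, arg_real_mul _ (norm_pos_iff.mpr hv)]

theorem re_mul_exp_neg_mul_I (z : ℂ) (t : ℝ) :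
    (z * exp (-t * I)).re = z.re * Real.cos t + z.im * Real.sin t := by
  rw [← ofReal_neg, exp_mul_I]
  simp [← ofReal_cos, ← ofReal_sin]

theorem mul_exp_neg_arg_mem_sectorCap_iff (z : ℂ) {v : ℂ} (hv : v ≠ 0) (φ c p : ℝ) :
    z * exp (-arg v * I) ∈ sectorCap φ c p ↔
      (|arg (z * conj v)| ≤ φ → c * ‖z‖ ≤ p)
      ∧ c * (z.re * Real.cos (arg v - φ) + z.im * Real.sin (arg v - φ)) ≤ p
      ∧ c * (z.re * Real.cos (arg v + φ) + z.im * Real.sin (arg v + φ)) ≤ p := by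
  have hrotate (t : ℝ) : z * exp (-arg v * I) * exp (t * I) = z * exp (-↑(arg v - t) * I) := by
    rw [mul_assoc, ← exp_add]
    push_cast
    ring_nf
  rw [sectorCap, Set.mem_ofPred_eq, arg_mul_conj z hv, hrotate, ← ofReal_neg φ, hrotate,
    sub_neg_eq_add, re_mul_exp_neg_mul_I, re_mul_exp_neg_mul_I, norm_mul, ← ofReal_neg,
    norm_exp_ofReal_mul_I, mul_one]

end Complex

/-- The conditionally-described robust current feasible region of
constraints (13) is a convex subset of the plane. -/
theorem robust_current_region_convex
    (vmin vmax : ℝ) (hmin : 0 < vmin) (hle : vmin ≤ vmax)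
    (v0 : ℂ) (hv0 : v0 ≠ 0)
    (θ φ : ℝ) (hθ : θ = Complex.arg v0) (hφ : φ = Real.arccos (vmin / vmax))
    (pmax : ℝ) :
    Convex ℝ {i : ℂ |
      (|Complex.arg (i * (starRingEnd ℂ) v0)| ≤ φ → vmax * ‖i‖ ≤ pmax)
      ∧ vmax * (i.re * Real.cos (θ - φ) + i.im * Real.sin (θ - φ)) ≤ pmax
      ∧ vmax * (i.re * Real.cos (θ + φ) + i.im * Real.sin (θ + φ)) ≤ pmax} := by
  have hcap : Convex ℝ (sectorCap φ vmax pmax) :=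
    convex_sectorCap (hφ ▸ Real.arccos_nonneg _) (hmin.le.trans hle)
  have hrot : Convex ℝ ((· * exp (-arg v0 * I)) ⁻¹' sectorCap φ vmax pmax) :=
    hcap.linear_preimage (LinearMap.mulRight ℝ _)
  subst hθ
  convert hrot using 1
  exact Set.ext fun i => (mul_exp_neg_arg_mem_sectorCap_iff i hv0 φ vmax pmax).symm
end

section
/- Let vmin, vmax be real numbers with 0 < vmin ≤ vmax, let v0 be a nonzero complex number with θ = arg(v0), let φ = arccos(vmin/vmax), and let qmax be real. For a nonzero complex number i, the following are equivalent: (a) the reactive power Im(v · conj(i)) ≤ qmax for every v in S_V = {v ∈ ℂ : |v| ≤ vmax and Re(v · conj(v0)) ≥ vmin · |v0|}; (b) the conjunction of: (i) if |arg(I·i · conj(v0))| ≤ φ (where I is the imaginary unit) then vmax · |i| ≤ qmax, (ii) vmax · (Re(i)·sin(θ − φ) − Im(i)·cos(θ − φ)) ≤ qmax, and (iii) vmax · (Re(i)·sin(θ + φ) − Im(i)·cos(θ + φ)) ≤ qmax. (The robust reactive-power constraints are obtained from the active-power ones by rotating the current by 90 degrees.) -/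
/-!
Rotating the plane by `conj v0 / ‖v0‖` maps `S_V` onto the circular segment
`{u | ‖u‖ ≤ vmax ∧ vmax cos φ ≤ u.re}` and turns the reactive power of `v` into the inner product
`Re (u * conj z)` with `z = I * i * conj v0 / ‖v0‖`. A linear functional `Re (· * conj z)` attains
its maximum over the segment at the point `vmax z / ‖z‖` of the arc when `|arg z| ≤ φ`, and
otherwise at one of the corners `vmax e^{± iφ}`.
-/

open Complex ComplexConjugate

theorem exp_arg_mul_I_mul_conj (z : ℂ) : exp (arg z * I) * conj z = ‖z‖ := by
  conv_lhs => rw [← norm_mul_exp_arg_mul_I z]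
  rw [map_mul, conj_ofReal, ← exp_conj, mul_left_comm, ← exp_add]
  simp

def circularSegment (R φ : ℝ) : Set ℂ := {u | ‖u‖ ≤ R ∧ R * Real.cos φ ≤ u.re}

namespace circularSegment

variable {R φ : ℝ} {u : ℂ}

theorem conj_mem (hu : u ∈ circularSegment R φ) : conj u ∈ circularSegment R φ := by
  simpa [circularSegment] using hu

theorem ofReal_mul_exp_mem {t : ℝ} (hR : 0 ≤ R) (ht : Real.cos φ ≤ Real.cos t) :
    (R : ℂ) * exp (t * I) ∈ circularSegment R φ := by
  refine ⟨by simp [abs_of_nonneg hR], ?_⟩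
  simpa [exp_ofReal_mul_I_re] using mul_le_mul_of_nonneg_left ht hR

theorem eq_of_mem_zero (hu : u ∈ circularSegment R 0) : u = R := by
  obtain ⟨hnorm, hre⟩ := hu
  rw [Real.cos_zero, mul_one] at hre
  have hre_eq : u.re = ‖u‖ := le_antisymm (re_le_norm u) (hnorm.trans hre)
  have him : u.im = 0 := ((nonneg_iff.mp (re_eq_norm.mp hre_eq)).2).symm
  exact Complex.ext (by simpa using le_antisymm (hre_eq ▸ hnorm) hre) (by simpa using him)

theorem re_mul_conj_le (hu : u ∈ circularSegment R φ) (z : ℂ) : (u * conj z).re ≤ R * ‖z‖ :=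
  (re_le_norm _).trans (by simpa using mul_le_mul_of_nonneg_right hu.1 (norm_nonneg z))

/-- `sin φ • z = z.im • e^{iφ} - ‖z‖ sin (arg z - φ) • 1` is a nonnegative combination of the
outward normals of the circle and of the chord at the corner `R e^{iφ}`. -/
theorem re_mul_conj_le_of_lt_arg (hφ : 0 < φ) (hu : u ∈ circularSegment R φ) {z : ℂ}
    (hz : φ < arg z) : (u * conj z).re ≤ (R * exp (φ * I) * conj z).re := by
  have hs : 0 < Real.sin φ := Real.sin_pos_of_pos_of_lt_pi hφ (hz.trans_le (arg_le_pi z))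
  have him : 0 ≤ z.im := arg_nonneg_iff.mp (hφ.trans hz).le
  have hturn : 0 ≤ z.im * Real.cos φ - z.re * Real.sin φ := by
    rw [← norm_mul_cos_arg z, ← norm_mul_sin_arg z]
    have := mul_nonneg (norm_nonneg z) (Real.sin_nonneg_of_nonneg_of_le_pi (sub_nonneg.mpr hz.le)
      ((sub_le_self _ hφ.le).trans (arg_le_pi z)))
    rw [Real.sin_sub] at this
    linear_combination this
  have harc : u.re * Real.cos φ + u.im * Real.sin φ ≤ R := by
    have := (re_le_norm (u * conj (exp (φ * I)))).trans (by simpa using hu.1)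
    simpa [mul_re, exp_ofReal_mul_I_re, exp_ofReal_mul_I_im] using this
  have key : Real.sin φ * (u.re * z.re + u.im * z.im)
      ≤ Real.sin φ * (R * (Real.cos φ * z.re + Real.sin φ * z.im)) := by
    linear_combination mul_le_mul_of_nonneg_left harc him
      + mul_le_mul_of_nonneg_left hu.2 hturn - R * z.im * Real.sin_sq_add_cos_sq φ
  simpa [mul_re, exp_ofReal_mul_I_re, exp_ofReal_mul_I_im, mul_add, mul_assoc]
    using le_of_mul_le_mul_left key hs

theorem re_mul_conj_le_of_arg_lt_neg (hφ : 0 < φ) (hu : u ∈ circularSegment R φ) {z : ℂ}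
    (hz : arg z < -φ) : (u * conj z).re ≤ (R * exp (↑(-φ) * I) * conj z).re := by
  have harg : φ < arg (conj z) := by
    rw [arg_conj, if_neg (by linarith [Real.pi_pos])]
    linarith
  have := re_mul_conj_le_of_lt_arg hφ (conj_mem hu) harg
  rw [← conj_re, ← conj_re (_ * conj z)]
  simpa [← exp_conj] using this

theorem forall_mem_re_mul_conj_le_iff (hR : 0 ≤ R) (hφ₀ : 0 ≤ φ) (hφπ : φ ≤ Real.pi)
    (z : ℂ) (q : ℝ) :
    (∀ u ∈ circularSegment R φ, (u * conj z).re ≤ q) ↔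
      ((|arg z| ≤ φ → R * ‖z‖ ≤ q) ∧ (R * exp (↑(-φ) * I) * conj z).re ≤ q ∧
        (R * exp (φ * I) * conj z).re ≤ q) := by
  constructor
  · intro h
    refine ⟨fun hz ↦ ?_, h _ (ofReal_mul_exp_mem hR (Real.cos_neg φ).ge),
      h _ (ofReal_mul_exp_mem hR le_rfl)⟩
    have hcos : Real.cos φ ≤ Real.cos (arg z) := by
      rw [← Real.cos_abs (arg z)]
      exact Real.cos_le_cos_of_nonneg_of_le_pi (abs_nonneg _) hφπ hz
    have := h _ (ofReal_mul_exp_mem hR hcos)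
    rwa [mul_assoc, exp_arg_mul_I_mul_conj, ← ofReal_mul, ofReal_re] at this
  · rintro ⟨hcentral, hminus, hplus⟩ u hu
    rcases le_or_gt |arg z| φ with hz | hz
    · exact (re_mul_conj_le hu z).trans (hcentral hz)
    rcases hφ₀.eq_or_lt with rfl | hφ
    · simpa [eq_of_mem_zero hu] using hplus
    rcases lt_abs.mp hz with hz | hz
    · exact (re_mul_conj_le_of_lt_arg hφ hu hz).trans hplus
    · exact (re_mul_conj_le_of_arg_lt_neg hφ hu (by linarith)).trans hminus

end circularSegment

theorem mul_conj_exp_arg_mem_circularSegment_iff {R φ : ℝ} {w : ℂ} (hw : w ≠ 0) (v : ℂ) :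
    v * conj (exp (arg w * I)) ∈ circularSegment R φ ↔
      ‖v‖ ≤ R ∧ R * Real.cos φ * ‖w‖ ≤ (v * conj w).re := by
  have hre : (v * conj w).re = (v * conj (exp (arg w * I))).re * ‖w‖ := by
    conv_lhs => rw [← norm_mul_exp_arg_mul_I w]
    rw [map_mul, conj_ofReal, mul_left_comm, re_ofReal_mul, mul_comm]
  rw [hre, mul_le_mul_iff_left₀ (norm_pos_iff.mpr hw)]
  simp [circularSegment]

theorem im_mul_conj_eq_re_mul_conj_rotate {e : ℂ} (he : ‖e‖ = 1) (v i : ℂ) :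
    (v * conj i).im = (v * conj e * conj (I * i * conj e)).re := by
  have hee : e * conj e = 1 := by rw [mul_conj, normSq_eq_norm_sq, he]; simp
  have : v * conj e * conj (I * i * conj e) = -I * (v * conj i) * (e * conj e) := by
    simp only [map_mul, conj_I, conj_conj]; ring
  rw [this, hee]
  simp

theorem re_ofReal_mul_exp_mul_conj_rotate (R t θ : ℝ) (i : ℂ) :
    (R * exp (t * I) * conj (I * i * conj (exp (θ * I)))).re =
      R * (i.re * Real.sin (θ + t) - i.im * Real.cos (θ + t)) := by
  simp [mul_re, mul_im, exp_ofReal_mul_I_re, exp_ofReal_mul_I_im, Real.sin_add, Real.cos_add]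
  ring

theorem robust_reactive_power_constraints_characterization_general
    (vmin vmax : ℝ) (hmin : 0 < vmin) (hle : vmin ≤ vmax)
    (v0 : ℂ) (hv0 : v0 ≠ 0)
    (θ φ : ℝ) (hθ : θ = Complex.arg v0) (hφ : φ = Real.arccos (vmin / vmax))
    (qmax : ℝ) (i : ℂ) :
    (∀ v ∈ {v : ℂ | ‖v‖ ≤ vmax ∧
        vmin * ‖v0‖ ≤ (v * (starRingEnd ℂ) v0).re},
      (v * (starRingEnd ℂ) i).im ≤ qmax)
    ↔ ((|Complex.arg (Complex.I * i * (starRingEnd ℂ) v0)| ≤ φ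
          → vmax * ‖i‖ ≤ qmax)
        ∧ vmax * (i.re * Real.sin (θ - φ) - i.im * Real.cos (θ - φ)) ≤ qmax
        ∧ vmax * (i.re * Real.sin (θ + φ) - i.im * Real.cos (θ + φ)) ≤ qmax) := by
  subst hθ
  have hvmax : 0 < vmax := hmin.trans_le hle
  have hcos : vmax * Real.cos φ = vmin := by
    rw [hφ, Real.cos_arccos (by linarith [div_pos hmin hvmax]) ((div_le_one hvmax).2 hle)]
    field_simp
  set e := exp (arg v0 * I)
  have he : ‖e‖ = 1 := norm_exp_ofReal_mul_I _
  have harg : arg (I * i * conj v0) = arg (I * i * conj e) := by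
    conv_lhs => rw [← norm_mul_exp_arg_mul_I v0, map_mul, conj_ofReal, mul_left_comm,
      arg_real_mul _ (norm_pos_iff.mpr hv0)]
  have hnorm : ‖I * i * conj e‖ = ‖i‖ := by simp [he]
  calc _ ↔ ∀ v, v * conj e ∈ circularSegment vmax φ →
          (v * conj e * conj (I * i * conj e)).re ≤ qmax := by
        refine forall_congr' fun v ↦ ?_
        rw [Set.mem_ofPred_eq, ← hcos, ← mul_conj_exp_arg_mem_circularSegment_iff hv0,
          im_mul_conj_eq_re_mul_conj_rotate he]
    _ ↔ ∀ u ∈ circularSegment vmax φ, (u * conj (I * i * conj e)).re ≤ qmax :=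
        Equiv.forall_congr_right (Equiv.mulRight₀ (conj e) (by simp [← norm_ne_zero_iff, he]))
          (q := fun u ↦ u ∈ circularSegment vmax φ → (u * conj (I * i * conj e)).re ≤ qmax)
    _ ↔ _ := by
      rw [circularSegment.forall_mem_re_mul_conj_le_iff hvmax.le (hφ ▸ Real.arccos_nonneg _)
        (hφ ▸ Real.arccos_le_pi _), re_ofReal_mul_exp_mul_conj_rotate,
        re_ofReal_mul_exp_mul_conj_rotate, ← sub_eq_add_neg, harg, hnorm]

/-- The robust reactive-power constraints are obtained from the
active-power ones by rotating the current by 90 degrees: characterization of the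
currents robustly feasible for the reactive-power upper bound over `S_V`. -/
theorem robust_reactive_power_constraints_characterization
    (vmin vmax : ℝ) (hmin : 0 < vmin) (hle : vmin ≤ vmax)
    (v0 : ℂ) (hv0 : v0 ≠ 0)
    (θ φ : ℝ) (hθ : θ = Complex.arg v0) (hφ : φ = Real.arccos (vmin / vmax))
    (qmax : ℝ) (i : ℂ) (hi : i ≠ 0) :
    (∀ v ∈ {v : ℂ | ‖v‖ ≤ vmax ∧
        vmin * ‖v0‖ ≤ (v * (starRingEnd ℂ) v0).re},
      (v * (starRingEnd ℂ) i).im ≤ qmax)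
    ↔ ((|Complex.arg (Complex.I * i * (starRingEnd ℂ) v0)| ≤ φ
          → vmax * ‖i‖ ≤ qmax)
        ∧ vmax * (i.re * Real.sin (θ - φ) - i.im * Real.cos (θ - φ)) ≤ qmax
        ∧ vmax * (i.re * Real.sin (θ + φ) - i.im * Real.cos (θ + φ)) ≤ qmax) :=
  robust_reactive_power_constraints_characterization_general vmin vmax hmin hle v0 hv0 θ φ hθ hφ
    qmax i
end

section
/- Let m ≥ 3 be a natural number and r ≥ 0 a real number. If a complex number i satisfies, for every j ∈ {1, 2, …, m}, the linear inequality Re(i)·cos((2j−1)π/m) + Im(i)·sin((2j−1)π/m) ≤ r·cos(π/m), then |i| ≤ r. (The regular m-gon polyhedral inner approximation of the current-magnitude constraint is indeed an inner approximation: every point of the inscribed polygon lies in the disk of radius r.) -/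
/-!
With `θ = arg i`, the left side of the `j`-th inequality is `‖i‖ cos (θ - a_j)` with
`a_j = (2j - 1)π/m`, and the angles `a_j` cut the circle into arcs of length `2π/m`, so some
`a_j` lies within `π/m` of `θ` modulo `2π`. For that `j`, `cos (θ - a_j) ≥ cos (π/m) > 0`
(as `m ≥ 3`), whence `‖i‖ cos (π/m) ≤ r cos (π/m)`.
-/

open Real

theorem Complex.re_mul_cos_add_im_mul_sin (z : ℂ) (a : ℝ) :
    z.re * Real.cos a + z.im * Real.sin a = ‖z‖ * Real.cos (z.arg - a) := by
  rw [Real.cos_sub, ← Complex.norm_mul_cos_arg, ← Complex.norm_mul_sin_arg]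
  ring

theorem exists_nat_mem_Icc_sub_one_le_le {m : ℕ} (hm : 1 ≤ m) {x : ℝ} (hx₀ : 0 ≤ x)
    (hxm : x ≤ m) : ∃ j ∈ Finset.Icc 1 m, (j : ℝ) - 1 ≤ x ∧ x ≤ j := by
  refine ⟨max ⌈x⌉₊ 1, Finset.mem_Icc.mpr ⟨le_max_right _ _, max_le (Nat.ceil_le.mpr hxm) hm⟩, ?_,
    (Nat.le_ceil x).trans (by exact_mod_cast le_max_left _ _)⟩
  rcases Nat.eq_zero_or_pos ⌈x⌉₊ with hc | hc
  · simp [hc, hx₀]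
  · rw [max_eq_left hc]
    linarith [Nat.ceil_lt_add_one hx₀]

theorem exists_abs_sub_odd_mul_pi_div_le {m : ℕ} (hm : 1 ≤ m) {θ : ℝ} (hθ₀ : 0 ≤ θ)
    (hθ : θ ≤ 2 * π) : ∃ j ∈ Finset.Icc 1 m, |θ - (2 * (j : ℝ) - 1) * π / m| ≤ π / m := by
  have hm₀ : (0 : ℝ) < m := by exact_mod_cast hm
  obtain ⟨j, hj, hjx, hxj⟩ := exists_nat_mem_Icc_sub_one_le_le hm
    (x := θ * m / (2 * π)) (by positivity) (by rw [div_le_iff₀ (by positivity)]; nlinarith)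
  refine ⟨j, hj, ?_⟩
  rw [le_div_iff₀ (by positivity)] at hjx
  rw [div_le_iff₀ (by positivity)] at hxj
  rw [show θ - (2 * (j : ℝ) - 1) * π / m = (θ * m - (2 * j - 1) * π) / m by field_simp,
    abs_div, abs_of_pos hm₀]
  refine div_le_div_of_nonneg_right ?_ hm₀.le
  rw [abs_le]; constructor <;> nlinarith [pi_pos]

theorem exists_cos_pi_div_le_cos_sub_odd_mul_pi_div {m : ℕ} (hm : 1 ≤ m) (θ : ℝ) :
    ∃ j ∈ Finset.Icc 1 m, cos (π / m) ≤ cos (θ - (2 * (j : ℝ) - 1) * π / m) := by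
  obtain ⟨hθ₀, hθ⟩ := toIcoMod_mem_Ico' two_pi_pos θ
  obtain ⟨j, hj, hclose⟩ := exists_abs_sub_odd_mul_pi_div_le hm hθ₀ hθ.le
  refine ⟨j, hj, ?_⟩
  have hθ_eq : θ = toIcoMod two_pi_pos 0 θ + toIcoDiv two_pi_pos 0 θ * (2 * π) := by
    rw [← self_sub_toIcoMod_eq_mul]; ring
  rw [hθ_eq, add_sub_right_comm, cos_add_int_mul_two_pi, ← cos_abs (_ - _)]
  exact cos_le_cos_of_nonneg_of_le_pi (abs_nonneg _)
    (div_le_self pi_pos.le (by exact_mod_cast hm)) hclose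

theorem cos_pi_div_pos {m : ℕ} (hm : 3 ≤ m) : 0 < cos (π / m) := by
  apply cos_pos_of_mem_Ioo
  constructor
  · linarith [show 0 < π / m by positivity, pi_pos]
  · have hm₃ : (3 : ℝ) ≤ m := by exact_mod_cast hm
    linarith [div_le_div_of_nonneg_left pi_pos.le (by norm_num) hm₃, pi_pos]

theorem polygon_inner_approx_subset_disk_general
    (m : ℕ) (hm : 3 ≤ m) (r : ℝ) (i : ℂ)
    (hpoly : ∀ j ∈ Finset.Icc 1 m,
      i.re * Real.cos ((2 * (j : ℝ) - 1) * Real.pi / m)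
        + i.im * Real.sin ((2 * (j : ℝ) - 1) * Real.pi / m)
        ≤ r * Real.cos (Real.pi / m)) :
    ‖i‖ ≤ r := by
  obtain ⟨j, hj, hcos⟩ := exists_cos_pi_div_le_cos_sub_odd_mul_pi_div (by omega : 1 ≤ m) i.arg
  refine le_of_mul_le_mul_right ?_ (cos_pi_div_pos hm)
  calc ‖i‖ * cos (π / m) ≤ ‖i‖ * cos (i.arg - (2 * (j : ℝ) - 1) * π / m) :=
        mul_le_mul_of_nonneg_left hcos (norm_nonneg i)
    _ ≤ r * cos (π / m) := by
        rw [← Complex.re_mul_cos_add_im_mul_sin]; exact hpoly j hj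

/-- The regular `m`-gon polyhedral inner approximation of the
current-magnitude constraint is indeed an inner approximation: every point of the
inscribed polygon lies in the disk of radius `r`. -/
theorem polygon_inner_approx_subset_disk
    (m : ℕ) (hm : 3 ≤ m) (r : ℝ) (hr : 0 ≤ r) (i : ℂ)
    (hpoly : ∀ j ∈ Finset.Icc 1 m,
      i.re * Real.cos ((2 * (j : ℝ) - 1) * Real.pi / m)
        + i.im * Real.sin ((2 * (j : ℝ) - 1) * Real.pi / m)
        ≤ r * Real.cos (Real.pi / m)) :
    ‖i‖ ≤ r :=
  polygon_inner_approx_subset_disk_general m hm r i hpoly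
end

section
/- Let vmin, vmax be real numbers with 0 < vmin < vmax, let v0 be a nonzero complex number with θ = arg(v0), let φ = arccos(vmin/vmax), and let N ≥ 2 be a natural number. Define the partition angles ψ_k = θ − φ + 2kφ/N for k = 0, 1, …, N. Suppose a complex number v satisfies the lower-bound constraint Re(v · conj(v0)) ≥ vmin · |v0| and, for each k = 0, …, N−1, the chord constraint Re(v · exp(−i·(ψ_k + ψ_{k+1})/2)) ≤ vmax·cos(φ/N). Then vmin ≤ |v| ≤ vmax. (The polyhedral voltage feasibility domain obtained by replacing the outer circle of radius vmax by inscribed chords over a uniform partition of the arc [θ − φ, θ + φ] is an inner approximation of the annulus constraint.) -/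
/-!
Up to the rotation by `θ`, the constraints cut out the convex polygon with vertices
`vmax e^{iψ_k}`: the lower bound is the line `Re w = vmax cos φ` through the two extreme vertices.
Together with the first (resp. last) chord it forces `w` to the left of `e^{iψ_0}` (resp. to the
right of `e^{iψ_N}`), by an explicit nonnegative combination of the two inequalities. A discrete
intermediate value argument on the signs of `Im (w e^{-iψ_k})` then places `w` in a sector between
consecutive vertex directions, of half-angle `h = φ / N` around the chord's midpoint direction `μ`;
there `‖w‖ cos h ≤ Re (w e^{-iμ}) ≤ vmax cos h`.
-/

open Real Set
open Complex (I)
open ComplexConjugate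

lemma exists_ge_and_succ_le {α : Type*} [LinearOrder α] (f : ℕ → α) (c : α) {N : ℕ}
    (hN : 0 < N) (h0 : c ≤ f 0) (hfN : f N ≤ c) :
    ∃ k < N, c ≤ f k ∧ f (k + 1) ≤ c := by
  induction N, hN using Nat.le_induction with
  | base => exact ⟨0, zero_lt_one, h0, hfN⟩
  | succ n _ ih =>
    rcases le_total (f n) c with hn | hn
    · obtain ⟨k, hk, hck⟩ := ih hn
      exact ⟨k, hk.trans n.lt_succ_self, hck⟩
    · exact ⟨n, n.lt_succ_self, hn, hfN⟩

lemma re_mul_exp_neg_mul_I (w : ℂ) (t : ℝ) :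
    (w * Complex.exp (-(t : ℂ) * I)).re = w.re * cos t + w.im * sin t := by
  rw [← Complex.ofReal_neg, Complex.mul_re, Complex.exp_ofReal_mul_I_re,
    Complex.exp_ofReal_mul_I_im, cos_neg, sin_neg]
  ring

lemma im_mul_exp_neg_mul_I (w : ℂ) (t : ℝ) :
    (w * Complex.exp (-(t : ℂ) * I)).im = w.im * cos t - w.re * sin t := by
  rw [← Complex.ofReal_neg, Complex.mul_im, Complex.exp_ofReal_mul_I_re,
    Complex.exp_ofReal_mul_I_im, cos_neg, sin_neg]
  ring

lemma norm_mul_exp_neg_mul_I (w : ℂ) (t : ℝ) : ‖w * Complex.exp (-(t : ℂ) * I)‖ = ‖w‖ := by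
  rw [norm_mul, ← Complex.ofReal_neg, Complex.norm_exp_ofReal_mul_I, mul_one]

lemma mul_exp_neg_mul_I_add (w : ℂ) (s t : ℝ) :
    w * Complex.exp (-((s + t : ℝ) : ℂ) * I) =
      w * Complex.exp (-(s : ℂ) * I) * Complex.exp (-(t : ℂ) * I) := by
  rw [mul_assoc, ← Complex.exp_add]
  push_cast
  ring_nf

lemma conj_mul_exp_neg_mul_I (w : ℂ) (t : ℝ) :
    conj w * Complex.exp (-(t : ℂ) * I) = conj (w * Complex.exp (-((-t : ℝ) : ℂ) * I)) := by
  rw [map_mul, ← Complex.exp_conj]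
  simp

lemma re_mul_conj_eq_norm_mul (v v₀ : ℂ) :
    (v * conj v₀).re = ‖v₀‖ * (v * Complex.exp (-(v₀.arg : ℂ) * I)).re := by
  conv_lhs => rw [← Complex.norm_mul_exp_arg_mul_I v₀]
  rw [map_mul, ← Complex.exp_conj, Complex.conj_ofReal, map_mul, Complex.conj_ofReal,
    Complex.conj_I, mul_neg, neg_mul, mul_left_comm, Complex.re_ofReal_mul]

lemma norm_le_of_sector_of_chord {w : ℂ} {α h R : ℝ} (hh : h ∈ Ioo 0 (π / 2))
    (hleft : 0 ≤ (w * Complex.exp (-(α : ℂ) * I)).im)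
    (hright : (w * Complex.exp (-((α + 2 * h : ℝ) : ℂ) * I)).im ≤ 0)
    (hchord : (w * Complex.exp (-((α + h : ℝ) : ℂ) * I)).re ≤ R * cos h) :
    ‖w‖ ≤ R := by
  set z := w * Complex.exp (-((α + h : ℝ) : ℂ) * I)
  rw [show α = α + h + -h by ring, mul_exp_neg_mul_I_add, im_mul_exp_neg_mul_I, cos_neg,
    sin_neg] at hleft
  rw [show α + 2 * h = α + h + h by ring, mul_exp_neg_mul_I_add, im_mul_exp_neg_mul_I] at hright
  have hcos : 0 < cos h := cos_pos_of_mem_Ioo ⟨by linarith [hh.1, pi_pos], hh.2⟩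
  have hsin : 0 < sin h := sin_pos_of_pos_of_lt_pi hh.1 (by linarith [hh.2, pi_pos])
  -- In the frame of `z` the sector is `|Im z| cos h ≤ Re z sin h`, so `‖z‖ cos h ≤ Re z`.
  have hre : 0 ≤ z.re := by nlinarith
  have hR : 0 ≤ R := nonneg_of_mul_nonneg_left (hre.trans hchord) hcos
  have hsq : ‖z‖ ^ 2 * cos h ^ 2 ≤ R ^ 2 * cos h ^ 2 := by
    rw [Complex.sq_norm, Complex.normSq_apply]
    nlinarith [sin_sq_add_cos_sq h]
  rw [← norm_mul_exp_neg_mul_I w (α + h)]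
  exact (pow_le_pow_iff_left₀ (norm_nonneg z) hR two_ne_zero).1
    (le_of_mul_le_mul_right hsq (by positivity))

lemma im_mul_exp_neg_nonpos_of_chord {w : ℂ} {θ φ h R : ℝ} (hφ : 0 ≤ cos φ) (hh : 0 ≤ cos h)
    (hφh : 0 < sin (φ - h))
    (hlb : R * cos φ ≤ (w * Complex.exp (-(θ : ℂ) * I)).re)
    (hchord : (w * Complex.exp (-((θ + (φ - h) : ℝ) : ℂ) * I)).re ≤ R * cos h) :
    (w * Complex.exp (-((θ + φ : ℝ) : ℂ) * I)).im ≤ 0 := by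
  set z := w * Complex.exp (-(θ : ℂ) * I)
  rw [mul_exp_neg_mul_I_add, re_mul_exp_neg_mul_I] at hchord
  rw [mul_exp_neg_mul_I_add, im_mul_exp_neg_mul_I]
  -- Farkas certificate: the chord and the lower bound meet at the vertex `R e^{iφ}`.
  have hfarkas : sin (φ - h) * (z.im * cos φ - z.re * sin φ) =
      cos φ * (z.re * cos (φ - h) + z.im * sin (φ - h)) - cos h * z.re := by
    rw [show cos h = cos (φ - (φ - h)) by ring_nf, cos_sub φ (φ - h)]
    ring
  have : sin (φ - h) * (z.im * cos φ - z.re * sin φ) ≤ 0 := by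
    rw [hfarkas]
    nlinarith [mul_le_mul_of_nonneg_left hchord hφ, mul_le_mul_of_nonneg_left hlb hh]
  exact nonpos_of_mul_nonpos_right this hφh

lemma im_mul_exp_neg_nonneg_of_chord {w : ℂ} {θ φ h R : ℝ} (hφ : 0 ≤ cos φ) (hh : 0 ≤ cos h)
    (hφh : 0 < sin (φ - h))
    (hlb : R * cos φ ≤ (w * Complex.exp (-(θ : ℂ) * I)).re)
    (hchord : (w * Complex.exp (-((θ - (φ - h) : ℝ) : ℂ) * I)).re ≤ R * cos h) :
    0 ≤ (w * Complex.exp (-((θ - φ : ℝ) : ℂ) * I)).im := by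
  have hmirror := im_mul_exp_neg_nonpos_of_chord (w := conj w) (θ := -θ) hφ hh hφh
    (by rwa [conj_mul_exp_neg_mul_I, Complex.conj_re, neg_neg])
    (by rwa [conj_mul_exp_neg_mul_I, Complex.conj_re, neg_add, neg_neg, ← sub_eq_add_neg])
  rwa [conj_mul_exp_neg_mul_I, Complex.conj_im, neg_nonpos, neg_add, neg_neg,
    ← sub_eq_add_neg] at hmirror

theorem norm_le_of_chord_polygon {w : ℂ} {R θ φ : ℝ} {N : ℕ} {ψ : ℕ → ℝ}
    (hφ : φ ∈ Ioo 0 (π / 2)) (hN : 2 ≤ N) (hψ : ∀ k, ψ k = θ - φ + 2 * (k : ℝ) * φ / N)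
    (hlb : R * cos φ ≤ (w * Complex.exp (-(θ : ℂ) * I)).re)
    (hchords : ∀ k < N,
      (w * Complex.exp (-(((ψ k + ψ (k + 1)) / 2 : ℝ) : ℂ) * I)).re ≤ R * cos (φ / N)) :
    ‖w‖ ≤ R := by
  obtain ⟨hφpos, hφlt⟩ := hφ
  have hNpos : (2 : ℝ) ≤ N := by exact_mod_cast hN
  set h := φ / N with hdef
  have hhφ : h ≤ φ / 2 := div_le_div_of_nonneg_left hφpos.le two_pos hNpos
  have hhpos : 0 < h := by positivity
  have hstep : ∀ k, ψ (k + 1) = ψ k + 2 * h := fun k => by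
    rw [hψ, hψ, hdef]; push_cast; ring
  have hψ0 : ψ 0 = θ - φ := by simp [hψ]
  have hψN : ψ N = θ + φ := by rw [hψ]; field_simp; ring
  have hchord : ∀ k < N, (w * Complex.exp (-((ψ k + h : ℝ) : ℂ) * I)).re ≤ R * cos h :=
    fun k hk => by rw [show ψ k + h = (ψ k + ψ (k + 1)) / 2 by rw [hstep]; ring]; exact hchords k hk
  have hcosφ : 0 ≤ cos φ := cos_nonneg_of_mem_Icc ⟨by linarith [pi_pos], hφlt.le⟩
  have hcosh : 0 ≤ cos h := cos_nonneg_of_mem_Icc ⟨by linarith [pi_pos], by linarith⟩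
  have hsin : 0 < sin (φ - h) := sin_pos_of_pos_of_lt_pi (by linarith) (by linarith [pi_pos])
  have hfirst : 0 ≤ (w * Complex.exp (-(ψ 0 : ℂ) * I)).im := by
    refine hψ0 ▸ im_mul_exp_neg_nonneg_of_chord hcosφ hcosh hsin hlb ?_
    rw [show θ - (φ - h) = ψ 0 + h by rw [hψ0]; ring]
    exact hchord 0 (by omega)
  have hlast : (w * Complex.exp (-(ψ N : ℂ) * I)).im ≤ 0 := by
    refine hψN ▸ im_mul_exp_neg_nonpos_of_chord hcosφ hcosh hsin hlb ?_
    have hstep_last := hstep (N - 1)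
    rw [Nat.sub_add_cancel (by omega), hψN] at hstep_last
    rw [show θ + (φ - h) = ψ (N - 1) + h by linarith]
    exact hchord (N - 1) (by omega)
  obtain ⟨k, hk, hleft, hright⟩ := exists_ge_and_succ_le
    (fun j => (w * Complex.exp (-(ψ j : ℂ) * I)).im) 0 (by omega) hfirst hlast
  exact norm_le_of_sector_of_chord ⟨hhpos, by linarith⟩ hleft (hstep k ▸ hright) (hchord k hk)

/-- The polyhedral voltage feasibility domain obtained by replacing the
outer circle of radius `vmax` by inscribed chords over a uniform partition of the arc
`[θ - φ, θ + φ]` is an inner approximation of the annulus constraint. -/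
theorem polyhedral_voltage_domain_inner_approx
    (vmin vmax : ℝ) (hmin : 0 < vmin) (hlt : vmin < vmax)
    (v0 : ℂ) (hv0 : v0 ≠ 0)
    (θ φ : ℝ) (hθ : θ = Complex.arg v0) (hφ : φ = Real.arccos (vmin / vmax))
    (N : ℕ) (hN : 2 ≤ N)
    (ψ : ℕ → ℝ) (hψ : ∀ k, ψ k = θ - φ + 2 * (k : ℝ) * φ / N)
    (v : ℂ)
    (hlb : vmin * ‖v0‖ ≤ (v * (starRingEnd ℂ) v0).re)
    (hchords : ∀ k < N,
      (v * Complex.exp (-(((ψ k + ψ (k + 1)) / 2 : ℝ)) * Complex.I)).re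
        ≤ vmax * Real.cos (φ / N)) :
    vmin ≤ ‖v‖ ∧ ‖v‖ ≤ vmax := by
  have hvmax : 0 < vmax := hmin.trans hlt
  have hratio : vmin / vmax ∈ Ioo 0 1 := ⟨div_pos hmin hvmax, (div_lt_one hvmax).2 hlt⟩
  have hcosφ : vmax * cos φ = vmin := by
    rw [hφ, cos_arccos (by linarith [hratio.1]) hratio.2.le, mul_div_cancel₀ _ hvmax.ne']
  have hφmem : φ ∈ Ioo 0 (π / 2) := hφ ▸ ⟨arccos_pos.2 hratio.2, arccos_lt_pi_div_two.2 hratio.1⟩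
  have hre : vmin ≤ (v * Complex.exp (-(θ : ℂ) * I)).re := by
    rw [re_mul_conj_eq_norm_mul, ← hθ, mul_comm] at hlb
    exact le_of_mul_le_mul_left hlb (norm_pos_iff.2 hv0)
  exact ⟨hre.trans ((Complex.re_le_norm _).trans (norm_mul_exp_neg_mul_I v θ).le),
    norm_le_of_chord_polygon hφmem hN hψ (hcosφ ▸ hre) hchords⟩
end

section
/- Let vmin, vmax be real numbers with 0 < vmin < vmax, let v0 be a nonzero complex number with θ = arg(v0), let φ = arccos(vmin/vmax), and let N ≥ 2 be a natural number. Define the partition angles ψ_k = θ − φ + 2kφ/N for k = 0, 1, …, N. Then the polyhedral voltage feasibility domain {v ∈ ℂ : Re(v · conj(v0)) ≥ vmin·|v0| and, for each k = 0, …, N−1, Re(v · exp(−i·(ψ_k + ψ_{k+1})/2)) ≤ vmax·cos(φ/N)} equals the convex hull of the N + 1 corner points {vmax·exp(i·ψ_k) : k = 0, 1, …, N}. (Consequently, a linear constraint in v holds on the polyhedral voltage domain if and only if it holds at these corner points.) -/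
/-!
Let `c_k = R e^{iψ_k}` be the corners and write `v = r e^{i(θ + β)}`. The lower bound together
with the first and the last chord constraint forces `|β| ≤ φ`, so `v` lies in the cone spanned by
the end corners `c₀, c_N` and in the cone spanned by some adjacent pair `c_k, c_{k+1}`. Expanding
`v` in either pair, the lower bound says that the coefficients for `c₀, c_N` sum to at least `1`,
and the `k`-th chord constraint says that those for `c_k, c_{k+1}` sum to at most `1`. Hence the
ray through `v` meets the chord `[c₀, c_N]` before `v` and the chord `[c_k, c_{k+1}]` after it,
so `v` lies between two points of the hull. Conversely every corner satisfies every constraint by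
monotonicity of `cos` on `[0, π]`.
-/

open Complex Real

section ConvexHull

variable {𝕜 E : Type*} [Field 𝕜] [LinearOrder 𝕜] [IsStrictOrderedRing 𝕜] [AddCommGroup E]
  [Module 𝕜 E]

theorem Convex.mem_of_smul_mem_of_smul_mem {K : Set E} (hK : Convex 𝕜 K) {x : E} {a b : 𝕜}
    (ha : a • x ∈ K) (hb : b • x ∈ K) (ha1 : a ≤ 1) (hb1 : 1 ≤ b) : x ∈ K := by
  obtain ⟨c, d, hc, hd, hcd, h⟩ : (1 : 𝕜) ∈ segment 𝕜 a b := by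
    rw [segment_eq_Icc (ha1.trans hb1)]
    exact ⟨ha1, hb1⟩
  simp only [smul_eq_mul] at h
  simpa only [smul_smul, ← add_smul, h, one_smul] using hK ha hb hc hd hcd

theorem inv_smul_smul_add_smul_mem_convexHull {s : Set E} {p q : E} {a b : 𝕜} (hp : p ∈ s)
    (hq : q ∈ s) (ha : 0 ≤ a) (hb : 0 ≤ b) (hab : 0 < a + b) :
    (a + b)⁻¹ • (a • p + b • q) ∈ convexHull 𝕜 s := by
  refine segment_subset_convexHull hp hq ⟨a / (a + b), b / (a + b), by positivity, by positivity,
    by field_simp, ?_⟩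
  simp only [smul_add, smul_smul, div_eq_inv_mul]

theorem mem_convexHull_of_smul_add_smul_eq {s : Set E} {x p q p' q' : E} {a b a' b' : 𝕜}
    (hp : p ∈ s) (hq : q ∈ s) (hp' : p' ∈ s) (hq' : q' ∈ s) (ha : 0 ≤ a) (hb : 0 ≤ b)
    (ha' : 0 ≤ a') (hb' : 0 ≤ b') (hx : a • p + b • q = x) (hx' : a' • p' + b' • q' = x)
    (hab : 1 ≤ a + b) (hab' : a' + b' ≤ 1) (hx0 : x ≠ 0) : x ∈ convexHull 𝕜 s := by
  have hpos : 0 < a' + b' := by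
    refine (add_nonneg ha' hb').lt_of_ne fun h ↦ hx0 ?_
    obtain ⟨rfl, rfl⟩ : a' = 0 ∧ b' = 0 := ⟨by linarith, by linarith⟩
    simp [← hx']
  refine (convex_convexHull 𝕜 s).mem_of_smul_mem_of_smul_mem ?_ ?_ (inv_le_one_of_one_le₀ hab)
    ((one_le_inv₀ hpos).2 hab')
  · rw [← hx]
    exact inv_smul_smul_add_smul_mem_convexHull hp hq ha hb (by linarith)
  · rw [← hx']
    exact inv_smul_smul_add_smul_mem_convexHull hp' hq' ha' hb' hpos

end ConvexHull

theorem exists_lt_apply_le_le_apply_succ (f : ℕ → ℝ) {y : ℝ} {N : ℕ} (hN : 1 ≤ N)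
    (h₀ : f 0 ≤ y) (hN' : y ≤ f N) : ∃ k < N, f k ≤ y ∧ y ≤ f (k + 1) := by
  induction N, hN using Nat.le_induction with
  | base => exact ⟨0, one_pos, h₀, hN'⟩
  | succ n _ ih =>
    by_cases hy : y ≤ f n
    · obtain ⟨k, hk, hfk⟩ := ih hy
      exact ⟨k, hk.trans n.lt_succ_self, hfk⟩
    · exact ⟨n, n.lt_succ_self, (not_le.1 hy).le, hN'⟩

theorem cos_le_cos_of_abs_le_abs {x y : ℝ} (hxy : |x| ≤ |y|) (hy : |y| ≤ π) :
    Real.cos y ≤ Real.cos x := by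
  rw [← Real.cos_abs x, ← Real.cos_abs y]
  exact cos_le_cos_of_nonneg_of_le_pi (abs_nonneg x) hy hxy

theorem cos_mul_cos_lt_cos_mul_cos {ε φ β : ℝ} (hε : 0 < ε) (hεφ : ε < φ) (hφβ : φ < β)
    (hβ : β < π / 2) : Real.cos ε * Real.cos β < Real.cos φ * Real.cos (β - φ + ε) := by
  have h : Real.cos (β - ε) < Real.cos |β + ε - 2 * φ| := by
    refine cos_lt_cos_of_nonneg_of_le_pi (abs_nonneg _) (by linarith) ?_
    rw [abs_lt]
    constructor <;> linarith
  rw [Real.cos_abs] at h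
  have h₁ : Real.cos (β - ε) + Real.cos (β + ε) = 2 * (Real.cos ε * Real.cos β) := by
    rw [Real.cos_sub, Real.cos_add]
    ring
  have h₂ : Real.cos (β + ε - 2 * φ) + Real.cos (β + ε) =
      2 * (Real.cos φ * Real.cos (β - φ + ε)) := by
    rw [show β + ε - 2 * φ = (β - φ + ε) - φ by ring, show β + ε = (β - φ + ε) + φ by ring,
      Real.cos_sub (β - φ + ε) φ, Real.cos_add (β - φ + ε) φ]
    ring
  linarith

theorem le_of_mul_cos_bounds {r R β φ δ : ℝ} (hr : 0 < r) (hδ : 0 < δ) (hδφ : δ < φ)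
    (hβ : β < π / 2) (hlow : R * Real.cos φ ≤ r * Real.cos β)
    (hchord : r * Real.cos (β - φ + δ) ≤ R * Real.cos δ) : β ≤ φ := by
  by_contra! hφβ
  have hcosφ : 0 < Real.cos φ := cos_pos_of_mem_Ioo ⟨by linarith, by linarith⟩
  have hcosδ : 0 < Real.cos δ := cos_pos_of_mem_Ioo ⟨by linarith, by linarith⟩
  nlinarith [mul_lt_mul_of_pos_left (cos_mul_cos_lt_cos_mul_cos hδ hδφ hφβ hβ) hr,
    mul_le_mul_of_nonneg_left hchord hcosφ.le, mul_le_mul_of_nonneg_left hlow hcosδ.le]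

theorem abs_le_of_chord_constraints {r R β φ : ℝ} {N : ℕ} (hr : 0 < r) (hφ : 0 < φ) (hN : 2 ≤ N)
    (hβ : |β| < π / 2) (hlow : R * Real.cos φ ≤ r * Real.cos β)
    (hchord : ∀ k < N, r * Real.cos (β + φ - (2 * k + 1) * (φ / N)) ≤ R * Real.cos (φ / N)) :
    |β| ≤ φ := by
  have hδ : 0 < φ / N := div_pos hφ (by positivity)
  have hδφ : φ / N < φ := div_lt_self hφ (by exact_mod_cast hN)
  obtain ⟨n, rfl⟩ : ∃ n, N = n + 1 := ⟨N - 1, by omega⟩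
  refine abs_le.2 ⟨neg_le.1 (le_of_mul_cos_bounds hr hδ hδφ (neg_lt.1 (abs_lt.1 hβ).1)
    (by rwa [Real.cos_neg]) ?_), le_of_mul_cos_bounds hr hδ hδφ (abs_lt.1 hβ).2 hlow ?_⟩
  · convert hchord 0 (by omega) using 2
    rw [← Real.cos_neg]
    ring_nf
  · convert hchord n (by omega) using 3
    field_simp
    push_cast
    ring

theorem re_ofReal_mul_exp_mul_exp_neg (r x y : ℝ) :
    ((r : ℂ) * exp (x * I) * exp (-(y : ℂ) * I)).re = r * Real.cos (x - y) := by
  rw [mul_assoc, ← Complex.exp_add, ← add_mul, ← sub_eq_add_neg, ← ofReal_sub, re_ofReal_mul,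
    exp_ofReal_mul_I_re]

theorem re_mul_conj_eq_norm_mul_re_mul_exp_neg_arg (v z : ℂ) :
    (v * starRingEnd ℂ z).re = ‖z‖ * (v * exp (-(arg z : ℂ) * I)).re := by
  conv_lhs => rw [← norm_mul_exp_arg_mul_I z]
  rw [map_mul, conj_ofReal, ← exp_conj, map_mul, conj_ofReal, conj_I, mul_neg, ← neg_mul,
    mul_left_comm, re_ofReal_mul]

theorem sin_smul_exp_mul_I (s x t : ℝ) :
    Real.sin (t - s) • exp (x * I) =
      Real.sin (t - x) • exp (s * I) + Real.sin (x - s) • exp (t * I) := by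
  simp only [Complex.real_smul, ofReal_sin, ofReal_sub, Complex.sin, Complex.exp_sub,
    Complex.exp_neg, sub_mul, neg_mul]
  have hs := Complex.exp_ne_zero (s * I)
  have hx := Complex.exp_ne_zero (x * I)
  have ht := Complex.exp_ne_zero (t * I)
  field_simp
  ring

theorem exists_nonneg_smul_add_smul_eq_mul_exp {R r s x t : ℝ} (hR : 0 < R) (hr : 0 ≤ r)
    (hsx : s ≤ x) (hxt : x ≤ t) (hst : s < t) (hts : t - s < π) :
    ∃ a b : ℝ, 0 ≤ a ∧ 0 ≤ b ∧
      a • ((R : ℂ) * exp (s * I)) + b • ((R : ℂ) * exp (t * I)) = r * exp (x * I) := by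
  have hsin : 0 < Real.sin (t - s) := sin_pos_of_pos_of_lt_pi (by linarith) hts
  have hsin₁ : 0 ≤ Real.sin (t - x) := sin_nonneg_of_nonneg_of_le_pi (by linarith) (by linarith)
  have hsin₂ : 0 ≤ Real.sin (x - s) := sin_nonneg_of_nonneg_of_le_pi (by linarith) (by linarith)
  refine ⟨r * Real.sin (t - x) / (R * Real.sin (t - s)),
    r * Real.sin (x - s) / (R * Real.sin (t - s)), by positivity, by positivity, ?_⟩
  have h := sin_smul_exp_mul_I s x t
  simp only [Complex.real_smul] at h ⊢
  have hR' : (R : ℂ) ≠ 0 := ofReal_ne_zero.2 hR.ne'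
  have hsin' : (Real.sin (t - s) : ℂ) ≠ 0 := ofReal_ne_zero.2 hsin.ne'
  push_cast at h hsin' ⊢
  field_simp
  linear_combination (-r : ℂ) * h

theorem re_smul_add_smul_mul_exp_neg_midpoint (a b R s t : ℝ) :
    ((a • ((R : ℂ) * exp (s * I)) + b • ((R : ℂ) * exp (t * I))) *
      exp (-(((s + t) / 2 : ℝ) : ℂ) * I)).re = (a + b) * (R * Real.cos ((t - s) / 2)) := by
  have key : ∀ c u : ℝ, ((c : ℂ) * ((R : ℂ) * exp (u * I)) *
      exp (-(((s + t) / 2 : ℝ) : ℂ) * I)).re = c * R * Real.cos (u - (s + t) / 2) := by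
    intro c u
    rw [← mul_assoc, ← ofReal_mul, re_ofReal_mul_exp_mul_exp_neg]
  rw [add_mul, add_re, Complex.real_smul, Complex.real_smul, key, key,
    show s - (s + t) / 2 = -((t - s) / 2) by ring, show t - (s + t) / 2 = (t - s) / 2 by ring,
    Real.cos_neg]
  ring

theorem exists_eq_mul_exp_of_re_pos {v : ℂ} {θ : ℝ} (hv : 0 < (v * exp (-(θ : ℂ) * I)).re) :
    ∃ r β : ℝ, 0 < r ∧ |β| < π / 2 ∧ v = r * exp ((θ + β : ℝ) * I) := by
  set w := v * exp (-(θ : ℂ) * I)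
  have hw : w ≠ 0 := by
    rintro h
    simp [h] at hv
  refine ⟨‖w‖, arg w, norm_pos_iff.2 hw, abs_arg_lt_pi_div_two_iff.2 (Or.inl hv), ?_⟩
  rw [ofReal_add, add_mul, Complex.exp_add, mul_left_comm, norm_mul_exp_arg_mul_I, mul_comm,
    mul_assoc, ← Complex.exp_add]
  simp

/-- The feasibility domain with `vmin = R cos φ` and the lower bound divided by `‖v0‖`. -/
def chordPolygon (R θ φ : ℝ) (N : ℕ) (ψ : ℕ → ℝ) : Set ℂ :=
  {v | R * Real.cos φ ≤ (v * exp (-(θ : ℂ) * I)).re ∧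
    ∀ k < N, (v * exp (-(((ψ k + ψ (k + 1)) / 2 : ℝ) : ℂ) * I)).re ≤ R * Real.cos (φ / N)}

def arcCorners (R : ℝ) (N : ℕ) (ψ : ℕ → ℝ) : Set ℂ :=
  {v | ∃ k ≤ N, v = R * exp (ψ k * I)}

section ChordPolygon

variable {R θ φ : ℝ} {N : ℕ} {ψ : ℕ → ℝ}

theorem convex_chordPolygon : Convex ℝ (chordPolygon R θ φ N ψ) := by
  intro x hx y hy a b ha hb hab
  have hre : ∀ z : ℂ, ((a • x + b • y) * z).re = a * (x * z).re + b * (y * z).re := fun z ↦ by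
    simp [add_mul, Complex.real_smul, mul_assoc]
  have hc : ∀ c : ℝ, c = a * c + b * c := fun c ↦ by rw [← add_mul, hab, one_mul]
  refine ⟨?_, fun k hk ↦ ?_⟩ <;> rw [hre]
  · linarith [hc (R * Real.cos φ), mul_le_mul_of_nonneg_left hx.1 ha,
      mul_le_mul_of_nonneg_left hy.1 hb]
  · linarith [hc (R * Real.cos (φ / N)), mul_le_mul_of_nonneg_left (hx.2 k hk) ha,
      mul_le_mul_of_nonneg_left (hy.2 k hk) hb]

theorem arcCorners_subset_chordPolygon (hR : 0 ≤ R) (hφ : 0 ≤ φ) (hφπ : φ < π / 2)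
    (hψ : ∀ k, ψ k = θ - φ + 2 * k * φ / N) : arcCorners R N ψ ⊆ chordPolygon R θ φ N ψ := by
  rintro _ ⟨k, hk, rfl⟩
  have hkN : (k : ℝ) / N ≤ 1 := div_le_one_of_le₀ (by exact_mod_cast hk) (by positivity)
  refine ⟨?_, fun j hj ↦ ?_⟩ <;> rw [re_ofReal_mul_exp_mul_exp_neg] <;>
    refine mul_le_mul_of_nonneg_left (cos_le_cos_of_abs_le_abs ?_ ?_) hR
  · have : ψ k - θ = φ * (2 * (k / N) - 1) := by rw [hψ]; ring
    rw [this, abs_mul, abs_of_nonneg hφ]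
    refine mul_le_of_le_one_right hφ (abs_le.2 ⟨?_, by linarith⟩)
    linarith [show (0 : ℝ) ≤ k / N by positivity]
  · rw [abs_of_nonneg hφ]
    linarith
  all_goals
    have hN : (0 : ℝ) < N := by exact_mod_cast j.zero_le.trans_lt hj
    have hδ : 0 ≤ φ / N := by positivity
    have hd : ψ k - (ψ j + ψ (j + 1)) / 2 = (2 * k - 2 * j - 1 : ℝ) * (φ / N) := by
      rw [hψ, hψ, hψ]; push_cast; ring
    rw [hd, abs_mul, abs_of_nonneg hδ]
  · refine le_mul_of_one_le_left hδ ?_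
    exact_mod_cast Int.one_le_abs (by omega : 2 * (k : ℤ) - 2 * j - 1 ≠ 0)
  · have hk' : (k : ℝ) ≤ N := by exact_mod_cast hk
    have hj' : (j : ℝ) + 1 ≤ N := by exact_mod_cast hj
    calc |(2 * k - 2 * j - 1 : ℝ)| * (φ / N) ≤ (2 * N - 1) * (φ / N) :=
          mul_le_mul_of_nonneg_right (abs_le.2 ⟨by linarith, by linarith⟩) hδ
      _ = 2 * φ - φ / N := by field_simp
      _ ≤ π := by linarith

theorem exists_polar_of_mem_chordPolygon (hR : 0 < R) (hφ : 0 < φ) (hφπ : φ < π / 2)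
    (hN : 2 ≤ N) (hψ : ∀ k, ψ k = θ - φ + 2 * k * φ / N) {v : ℂ}
    (hv : v ∈ chordPolygon R θ φ N ψ) :
    ∃ r β : ℝ, 0 < r ∧ |β| ≤ φ ∧ v = r * exp ((θ + β : ℝ) * I) := by
  obtain ⟨hlow, hchord⟩ := hv
  have hcosφ : 0 < Real.cos φ := cos_pos_of_mem_Ioo ⟨by linarith, hφπ⟩
  obtain ⟨r, β, hr, hβ, rfl⟩ := exists_eq_mul_exp_of_re_pos (lt_of_lt_of_le (by positivity) hlow)
  refine ⟨r, β, hr, abs_le_of_chord_constraints (R := R) hr hφ hN hβ ?_ fun k hk ↦ ?_, rfl⟩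
  · rwa [re_ofReal_mul_exp_mul_exp_neg, add_sub_cancel_left] at hlow
  · convert hchord k hk using 2
    rw [re_ofReal_mul_exp_mul_exp_neg, hψ, hψ]
    push_cast
    ring_nf

theorem chordPolygon_subset_convexHull_arcCorners (hR : 0 < R) (hφ : 0 < φ) (hφπ : φ < π / 2)
    (hN : 2 ≤ N) (hψ : ∀ k, ψ k = θ - φ + 2 * k * φ / N) :
    chordPolygon R θ φ N ψ ⊆ convexHull ℝ (arcCorners R N ψ) := by
  intro v hv
  obtain ⟨r, β, hr, hβφ, rfl⟩ := exists_polar_of_mem_chordPolygon hR hφ hφπ hN hψ hv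
  obtain ⟨hlow, hchord⟩ := hv
  have hN0 : (0 : ℝ) < N := by positivity
  have hψ0 : ψ 0 = θ - φ := by simp [hψ]
  have hψN : ψ N = θ + φ := by rw [hψ]; field_simp; ring
  have hstep : ∀ k, ψ (k + 1) - ψ k = 2 * (φ / N) := fun k ↦ by rw [hψ, hψ]; push_cast; ring
  have hδ : φ / N ≤ φ / 2 := div_le_div_of_nonneg_left hφ.le two_pos (by exact_mod_cast hN)
  have hcosφ : 0 < Real.cos φ := cos_pos_of_mem_Ioo ⟨by linarith, hφπ⟩
  have hcosδ : 0 < Real.cos (φ / N) :=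
    cos_pos_of_mem_Ioo ⟨by linarith [div_pos hφ hN0], by linarith⟩
  obtain ⟨hβ₁, hβ₂⟩ := abs_le.1 hβφ
  obtain ⟨k, hk, hψk, hψk1⟩ := exists_lt_apply_le_le_apply_succ ψ (y := θ + β) (N := N)
    (by omega) (by rw [hψ0]; linarith) (by rw [hψN]; linarith)
  obtain ⟨a, b, ha, hb, hab⟩ := exists_nonneg_smul_add_smul_eq_mul_exp hR hr.le (s := ψ 0)
    (t := ψ N) (x := θ + β) (by rw [hψ0]; linarith) (by rw [hψN]; linarith)
    (by rw [hψ0, hψN]; linarith) (by rw [hψ0, hψN]; linarith)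
  obtain ⟨a', b', ha', hb', hab'⟩ := exists_nonneg_smul_add_smul_eq_mul_exp hR hr.le hψk hψk1
    (by rw [← sub_pos, hstep]; positivity) (by rw [hstep]; linarith)
  refine mem_convexHull_of_smul_add_smul_eq ⟨0, by omega, rfl⟩ ⟨N, le_rfl, rfl⟩
    ⟨k, hk.le, rfl⟩ ⟨k + 1, hk, rfl⟩ ha hb ha' hb' hab hab' ?_ ?_ (by simp [hr.ne'])
  · rw [← hab, show θ = (ψ 0 + ψ N) / 2 by rw [hψ0, hψN]; ring,
      re_smul_add_smul_mul_exp_neg_midpoint, show (ψ N - ψ 0) / 2 = φ by rw [hψ0, hψN]; ring]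
      at hlow
    exact le_of_mul_le_mul_right (by rwa [one_mul]) (by positivity)
  · have h := hchord k hk
    rw [← hab', re_smul_add_smul_mul_exp_neg_midpoint, hstep,
      mul_div_cancel_left₀ _ two_ne_zero] at h
    exact le_of_mul_le_mul_right (by rwa [one_mul]) (by positivity)

theorem chordPolygon_eq_convexHull_arcCorners (hR : 0 < R) (hφ : 0 < φ) (hφπ : φ < π / 2)
    (hN : 2 ≤ N) (hψ : ∀ k, ψ k = θ - φ + 2 * k * φ / N) :
    chordPolygon R θ φ N ψ = convexHull ℝ (arcCorners R N ψ) :=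
  (chordPolygon_subset_convexHull_arcCorners hR hφ hφπ hN hψ).antisymm
    (convexHull_min (arcCorners_subset_chordPolygon hR.le hφ.le hφπ hψ) convex_chordPolygon)

end ChordPolygon

/-- The polyhedral voltage feasibility domain equals the convex hull of
its `N + 1` corner points `vmax · exp(i ψ_k)`, where `ψ_k = θ - φ + 2kφ/N`. -/
theorem polyhedral_voltage_domain_eq_convexHull_corners
    (vmin vmax : ℝ) (hmin : 0 < vmin) (hlt : vmin < vmax)
    (v0 : ℂ) (hv0 : v0 ≠ 0)
    (θ φ : ℝ) (hθ : θ = Complex.arg v0) (hφ : φ = Real.arccos (vmin / vmax))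
    (N : ℕ) (hN : 2 ≤ N)
    (ψ : ℕ → ℝ) (hψ : ∀ k, ψ k = θ - φ + 2 * (k : ℝ) * φ / N) :
    {v : ℂ | vmin * ‖v0‖ ≤ (v * (starRingEnd ℂ) v0).re
        ∧ ∀ k < N,
          (v * Complex.exp (-(((ψ k + ψ (k + 1)) / 2 : ℝ)) * Complex.I)).re
            ≤ vmax * Real.cos (φ / N)}
      = convexHull ℝ
          {v : ℂ | ∃ k ≤ N, v = (vmax : ℂ) * Complex.exp (ψ k * Complex.I)} := by
  have hvmax : 0 < vmax := hmin.trans hlt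
  have hratio : vmin / vmax < 1 := (div_lt_one hvmax).2 hlt
  have hvmin : vmin = vmax * Real.cos φ := by
    rw [hφ, cos_arccos (by linarith [div_pos hmin hvmax]) hratio.le]
    field_simp
  have hlower : ∀ v : ℂ, vmin * ‖v0‖ ≤ (v * (starRingEnd ℂ) v0).re ↔
      vmax * Real.cos φ ≤ (v * exp (-(θ : ℂ) * I)).re := fun v ↦ by
    rw [re_mul_conj_eq_norm_mul_re_mul_exp_neg_arg, ← hθ, hvmin, mul_comm _ ‖v0‖,
      mul_le_mul_iff_right₀ (norm_pos_iff.2 hv0)]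
  simp_rw [hlower]
  exact chordPolygon_eq_convexHull_arcCorners hvmax (hφ ▸ arccos_pos.2 hratio)
    (hφ ▸ arccos_lt_pi_div_two.2 (div_pos hmin hvmax)) hN hψ
end
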